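/- arXiv:2406.10657 — 13 statements merged into one kernel-verified Lean document; each statement's English description precedes it below -/
import Mathlib

section
/- Let N ≥ 1 and k : Fin N → ℕ with k i ≥ 1 for all i. For each i ∈ Fin N let ξ_i : Fin (k i) → (ℝ → ℝ) be a linearly independent family of functions whose last member is the constant function one, ξ_i (Fin.last _) = 1. Fix q with 0 ≤ q ≤ N, and consider the subfamily of product functions x ↦ ∏_i ξ_i (r i)(x i) indexed by those r ∈ Π i, Fin (k i) for which the number of indices i with r i ≠ Fin.last _ is at most q. Then this subfamily is linearly independent in the space of functions (Fin N → ℝ) → ℝ, and its ℝ-linear span has dimension Σ_{S ⊆ Fin N, |S| ≤ q} ∏_{i ∈ S} (k i − 1) (the sum over all subsets S of Fin N of cardinality at most q, with the empty product equal to 1). -/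
open Finset

private lemma prod_li : ∀ (N : ℕ) (k : Fin N → ℕ) (ξ : ∀ i, Fin (k i) → (ℝ → ℝ)),
    (∀ i, LinearIndependent ℝ (ξ i)) →
    LinearIndependent ℝ (fun r : (∀ i, Fin (k i)) =>
      fun x : Fin N → ℝ => ∏ i, ξ i (r i) (x i)) := by
  intro N
  induction N with
  | zero =>
    intro k ξ hξ
    have he : (fun r : (∀ i : Fin 0, Fin (k i)) =>
        fun x : Fin 0 → ℝ => ∏ i, ξ i (r i) (x i)) = fun _ _ => 1 := by
      funext r x; simp
    rw [he]
    refine linearIndependent_unique_iff.mpr ?_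
    intro h
    have := congrFun h (fun i => i.elim0)
    simpa using this
  | succ N ih =>
    intro k ξ hξ
    have hrest := Fintype.linearIndependent_iff.mp
      (ih (fun i => k i.succ) (fun i => ξ i.succ) (fun i => hξ i.succ))
    have h0 := Fintype.linearIndependent_iff.mp (hξ 0)
    rw [Fintype.linearIndependent_iff]
    intro c hc r0
    have key : ∀ j : Fin (k 0), ∀ r' : (∀ i : Fin N, Fin (k i.succ)),
        c (Fin.cons j r') = 0 := by
      have hA : ∀ x' : Fin N → ℝ, ∀ j : Fin (k 0),
          ∑ r' : (∀ i : Fin N, Fin (k i.succ)),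
            c (Fin.cons j r') * ∏ i, ξ i.succ (r' i) (x' i) = 0 := by
        intro x'
        refine h0 (fun j => ∑ r' : (∀ i : Fin N, Fin (k i.succ)),
            c (Fin.cons j r') * ∏ i, ξ i.succ (r' i) (x' i)) ?_
        funext t
        have hx := congrFun hc (Fin.cons t x')
        simp only [Finset.sum_apply, Pi.smul_apply, smul_eq_mul, Pi.zero_apply] at hx ⊢
        rw [← hx]
        rw [← (Fin.consEquiv (fun i => Fin (k i))).sum_comp, Fintype.sum_prod_type]
        refine Finset.sum_congr rfl fun j' _ => ?_
        rw [Finset.sum_mul]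
        refine Finset.sum_congr rfl fun r' _ => ?_
        simp [Fin.prod_univ_succ, Fin.consEquiv]
        ring
      intro j
      refine hrest (fun r' => c (Fin.cons j r')) ?_
      funext x'
      simpa using hA x' j
    have := key (r0 0) (Fin.tail r0)
    rwa [Fin.cons_self_tail] at this
open Finset

private lemma count_lemma (N : ℕ) (k : Fin N → ℕ) (hk : ∀ i, 1 ≤ k i) (q : ℕ) :
    Fintype.card {r : ∀ i : Fin N, Fin (k i) //
        (Finset.univ.filter (fun i => r i ≠ ⟨k i - 1, Nat.sub_lt (hk i) Nat.one_pos⟩)).card ≤ q} =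
    ∑ S ∈ Finset.univ.powerset.filter (fun S : Finset (Fin N) => S.card ≤ q),
      ∏ i ∈ S, (k i - 1) := by
  classical
  set last : ∀ i : Fin N, Fin (k i) := fun i => ⟨k i - 1, Nat.sub_lt (hk i) Nat.one_pos⟩ with hlastdef
  rw [Fintype.card_subtype]
  rw [Finset.card_eq_sum_card_fiberwise
    (f := fun r : ∀ i, Fin (k i) => Finset.univ.filter (fun i => r i ≠ last i))
    (t := Finset.univ.powerset.filter (fun S : Finset (Fin N) => S.card ≤ q))
    (fun r hr => by
      simp only [Finset.mem_coe, Finset.mem_filter, Finset.mem_powerset] at hr ⊢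
      exact ⟨Finset.subset_univ _, hr.2⟩)]
  refine Finset.sum_congr rfl fun S hS => ?_
  simp only [Finset.mem_filter, Finset.mem_powerset] at hS
  have hfib : ((Finset.univ.filter (fun r : ∀ i, Fin (k i) =>
        (Finset.univ.filter (fun i => r i ≠ last i)).card ≤ q)).filter
        (fun r => Finset.univ.filter (fun i => r i ≠ last i) = S))
      = Fintype.piFinset (fun i => if i ∈ S then Finset.univ.filter (fun j => j ≠ last i)
          else {last i}) := by
    ext r
    simp only [Finset.mem_filter, Finset.mem_univ, true_and, Fintype.mem_piFinset]
    constructor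
    · rintro ⟨_, hfS⟩ i
      by_cases hi : i ∈ S
      · simp only [hi, if_true, Finset.mem_filter, Finset.mem_univ, true_and]
        rw [← hfS] at hi
        simpa using hi
      · simp only [hi, if_false, Finset.mem_singleton]
        rw [← hfS] at hi
        simpa using hi
    · intro h
      have hfS : Finset.univ.filter (fun i => r i ≠ last i) = S := by
        ext i
        simp only [Finset.mem_filter, Finset.mem_univ, true_and]
        have := h i
        by_cases hi : i ∈ S
        · simp only [hi, if_true, Finset.mem_filter, Finset.mem_univ, true_and] at this
          simpa [hi] using this
        · simp only [hi, if_false, Finset.mem_singleton] at this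
          simp [hi, this]
      exact ⟨hfS ▸ hS.2, hfS⟩
  rw [hfib, Fintype.card_piFinset]
  have hcard : ∀ i : Fin N, (if i ∈ S then Finset.univ.filter (fun j => j ≠ last i)
      else {last i}).card = if i ∈ S then k i - 1 else 1 := by
    intro i
    by_cases hi : i ∈ S
    · simp only [hi, if_true]
      rw [Finset.filter_ne', Finset.card_erase_of_mem (Finset.mem_univ _), Finset.card_univ,
        Fintype.card_fin]
    · simp [hi]
  simp only [hcard]
  rw [Finset.prod_ite_mem, Finset.univ_inter]

/-- Type-(p+1) subfamily: the products indexed by those `r` with at most `q` non-last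
coordinates are linearly independent, and their span has dimension
`∑_{S ⊆ Fin N, |S| ≤ q} ∏_{i ∈ S} (k i − 1)`. -/
theorem stmt_3 (N : ℕ) (hN : 1 ≤ N) (k : Fin N → ℕ) (hk : ∀ i, 1 ≤ k i)
    (ξ : ∀ i : Fin N, Fin (k i) → (ℝ → ℝ))
    (hξ : ∀ i, LinearIndependent ℝ (ξ i))
    (hlast : ∀ i, ξ i ⟨k i - 1, Nat.sub_lt (hk i) Nat.one_pos⟩ = fun _ => 1)
    (q : ℕ) (hq : q ≤ N) :
    LinearIndependent ℝ
      (fun (r : {r : ∀ i : Fin N, Fin (k i) //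
          (Finset.univ.filter (fun i =>
            r i ≠ ⟨k i - 1, Nat.sub_lt (hk i) Nat.one_pos⟩)).card ≤ q}) =>
        (fun x : Fin N → ℝ => ∏ i, ξ i (r.1 i) (x i))) ∧
    Module.finrank ℝ (Submodule.span ℝ (Set.range
      (fun (r : {r : ∀ i : Fin N, Fin (k i) //
          (Finset.univ.filter (fun i =>
            r i ≠ ⟨k i - 1, Nat.sub_lt (hk i) Nat.one_pos⟩)).card ≤ q}) =>
        (fun x : Fin N → ℝ => ∏ i, ξ i (r.1 i) (x i))))) =
      ∑ S ∈ Finset.univ.powerset.filter (fun S : Finset (Fin N) => S.card ≤ q),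
        ∏ i ∈ S, (k i - 1) := by
  classical
  have hLI : LinearIndependent ℝ
      (fun (r : {r : ∀ i : Fin N, Fin (k i) //
          (Finset.univ.filter (fun i =>
            r i ≠ ⟨k i - 1, Nat.sub_lt (hk i) Nat.one_pos⟩)).card ≤ q}) =>
        (fun x : Fin N → ℝ => ∏ i, ξ i (r.1 i) (x i))) :=
    (prod_li N k ξ hξ).comp Subtype.val Subtype.val_injective
  refine ⟨hLI, ?_⟩
  rw [finrank_span_eq_card hLI]
  exact count_lemma N k hk q
end

section
/- Let F_1, F_2 be the coupled diffusion–convection operators defined in the context, with arbitrary real parameters. Suppose δ_{s,i} : ℝ → ℝ (s = 1,2; i = 1,2,3,4) are differentiable, and define u_s(x_1, x_2, t) = δ_{s,1}(t) + δ_{s,2}(t)x_1 + δ_{s,3}(t)x_2 + δ_{s,4}(t)x_1x_2. Then ∂u_s/∂t (x_1,x_2,t) = F_s(u_1(·,·,t), u_2(·,·,t))(x_1,x_2) holds for all (x_1,x_2,t) ∈ ℝ³ and s = 1,2 if and only if for all t ∈ ℝ and s = 1,2: δ_{s,1}'(t) = g_{s0}δ_{2,2}(t) + h_{s0}δ_{2,3}(t)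 + η_{s0}δ_{1,2}(t) + d_{s0}δ_{1,3}(t), δ_{s,2}'(t) = h_{s0}δ_{2,4}(t) + d_{s0}δ_{1,4}(t), δ_{s,3}'(t) = g_{s0}δ_{2,4}(t) + η_{s0}δ_{1,4}(t), and δ_{s,4}'(t) = 0. -/
/-! Under the ansatz each `u_s(·,·,t)` is biaffine, i.e. affine in `x₁` and in `x₂` separately.
Then `∂u/∂x₁` does not depend on `x₁` and the `q₁`-cross terms of the `x₁`-flux cancel, so that
flux is constant along `x₁`; likewise for `x₂`. Hence `F_s` maps biaffine pairs to biaffine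
functions with vanishing `x₁x₂`-coefficient, and the PDE becomes the comparison of the four
coefficients of two biaffine functions. -/

/-- Partial derivative in the first variable of a function `ℝ → ℝ → ℝ`. -/
noncomputable def pd1 (u : ℝ → ℝ → ℝ) : ℝ → ℝ → ℝ := fun x1 x2 => deriv (fun y => u y x2) x1

/-- Partial derivative in the second variable of a function `ℝ → ℝ → ℝ`. -/
noncomputable def pd2 (u : ℝ → ℝ → ℝ) : ℝ → ℝ → ℝ := fun x1 x2 => deriv (fun y => u x1 y) x2

/-- The coupled diffusion–convection operator `F_s`. -/
noncomputable def Fop (k0 q0 q1 p0 c0 c1 e0 g0 d0 h0 : ℝ) (u1 u2 : ℝ → ℝ → ℝ) : ℝ → ℝ → ℝ :=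
  fun x1 x2 =>
    pd1 (fun a b => (k0 - q1 * u2 a b) * pd1 u1 a b + (q1 * u1 a b + q0) * pd1 u2 a b) x1 x2 +
    pd2 (fun a b => (p0 - c1 * u2 a b) * pd2 u1 a b + (c1 * u1 a b + c0) * pd2 u2 a b) x1 x2 +
    e0 * pd1 u1 x1 x2 + g0 * pd1 u2 x1 x2 + d0 * pd2 u1 x1 x2 + h0 * pd2 u2 x1 x2

def biaffine (A B C D : ℝ) (x y : ℝ) : ℝ := A + B * x + C * y + D * x * y

theorem biaffine_eq_biaffine_iff {A B C D A' B' C' D' : ℝ} :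
    (∀ x y, biaffine A B C D x y = biaffine A' B' C' D' x y) ↔
      A = A' ∧ B = B' ∧ C = C' ∧ D = D' := by
  refine ⟨fun h => ?_, fun ⟨rfl, rfl, rfl, rfl⟩ _ _ => rfl⟩
  have h00 := h 0 0
  have h10 := h 1 0
  have h01 := h 0 1
  have h11 := h 1 1
  simp only [biaffine] at h00 h10 h01 h11
  exact ⟨by linarith, by linarith, by linarith, by linarith⟩

theorem hasDerivAt_biaffine {A B C D : ℝ → ℝ} {A' B' C' D' t : ℝ} (hA : HasDerivAt A A' t)
    (hB : HasDerivAt B B' t) (hC : HasDerivAt C C' t) (hD : HasDerivAt D D' t) (x y : ℝ) :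
    HasDerivAt (fun τ => biaffine (A τ) (B τ) (C τ) (D τ) x y) (biaffine A' B' C' D' x y) t :=
  ((hA.add (hB.mul_const x)).add (hC.mul_const y)).add ((hD.mul_const x).mul_const y)

theorem pd1_biaffine (A B C D x y : ℝ) : pd1 (biaffine A B C D) x y = B + D * y := by
  have h : (fun x => biaffine A B C D x y) = fun x => (A + C * y) + (B + D * y) * x := by
    funext x; simp only [biaffine]; ring
  simp [pd1, h]

theorem pd2_biaffine (A B C D x y : ℝ) : pd2 (biaffine A B C D) x y = C + D * x := by
  have h : biaffine A B C D x = fun y => (A + B * x) + (C + D * x) * y := by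
    funext y; simp only [biaffine]; ring
  simp [pd2, h]

theorem Fop_biaffine (k0 q0 q1 p0 c0 c1 e0 g0 d0 h0 A1 B1 C1 D1 A2 B2 C2 D2 x y : ℝ) :
    Fop k0 q0 q1 p0 c0 c1 e0 g0 d0 h0 (biaffine A1 B1 C1 D1) (biaffine A2 B2 C2 D2) x y =
      biaffine (g0 * B2 + h0 * C2 + e0 * B1 + d0 * C1) (h0 * D2 + d0 * D1)
        (g0 * D2 + e0 * D1) 0 x y := by
  have flux1 : (fun a b => (k0 - q1 * biaffine A2 B2 C2 D2 a b) * pd1 (biaffine A1 B1 C1 D1) a b +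
      (q1 * biaffine A1 B1 C1 D1 a b + q0) * pd1 (biaffine A2 B2 C2 D2) a b) =
      fun _ b => (k0 - q1 * (A2 + C2 * b)) * (B1 + D1 * b) +
        (q1 * (A1 + C1 * b) + q0) * (B2 + D2 * b) := by
    funext a b; simp only [pd1_biaffine, biaffine]; ring
  have flux2 : (fun a b => (p0 - c1 * biaffine A2 B2 C2 D2 a b) * pd2 (biaffine A1 B1 C1 D1) a b +
      (c1 * biaffine A1 B1 C1 D1 a b + c0) * pd2 (biaffine A2 B2 C2 D2) a b) =
      fun a _ => (p0 - c1 * (A2 + B2 * a)) * (C1 + D1 * a) +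
        (c1 * (A1 + B1 * a) + c0) * (C2 + D2 * a) := by
    funext a b; simp only [pd2_biaffine, biaffine]; ring
  simp only [Fop]
  rw [flux1, flux2]
  simp only [pd1_biaffine, pd2_biaffine]
  simp only [pd1, pd2, deriv_const, biaffine]
  ring

/-- The bilinear separable ansatz solves the coupled system iff the coefficient
functions satisfy the reduced ODE system. -/
theorem stmt_4 (k0 q0 q1 p0 c0 c1 η g d h : Fin 2 → ℝ)
    (δ : Fin 2 → Fin 4 → ℝ → ℝ) (hδ : ∀ s i, Differentiable ℝ (δ s i))
    (u : Fin 2 → ℝ → ℝ → ℝ → ℝ)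
    (hu : ∀ s x1 x2 t, u s x1 x2 t =
      δ s 0 t + δ s 1 t * x1 + δ s 2 t * x2 + δ s 3 t * x1 * x2) :
    (∀ (s : Fin 2) (x1 x2 t : ℝ),
      deriv (fun τ => u s x1 x2 τ) t =
        Fop (k0 s) (q0 s) (q1 s) (p0 s) (c0 s) (c1 s) (η s) (g s) (d s) (h s)
          (fun a b => u 0 a b t) (fun a b => u 1 a b t) x1 x2) ↔
    (∀ (s : Fin 2) (t : ℝ),
      deriv (δ s 0) t = g s * δ 1 1 t + h s * δ 1 2 t + η s * δ 0 1 t + d s * δ 0 2 t ∧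
      deriv (δ s 1) t = h s * δ 1 3 t + d s * δ 0 3 t ∧
      deriv (δ s 2) t = g s * δ 1 3 t + η s * δ 0 3 t ∧
      deriv (δ s 3) t = 0) := by
  have hu_biaffine : ∀ s x1 x2 t,
      u s x1 x2 t = biaffine (δ s 0 t) (δ s 1 t) (δ s 2 t) (δ s 3 t) x1 x2 := hu
  have hdt : ∀ s x1 x2 t, deriv (fun τ => u s x1 x2 τ) t =
      biaffine (deriv (δ s 0) t) (deriv (δ s 1) t) (deriv (δ s 2) t) (deriv (δ s 3) t) x1 x2 := by
    intro s x1 x2 t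
    simp only [hu_biaffine]
    exact (hasDerivAt_biaffine (hδ s 0 t).hasDerivAt (hδ s 1 t).hasDerivAt
      (hδ s 2 t).hasDerivAt (hδ s 3 t).hasDerivAt x1 x2).deriv
  have hF : ∀ s x1 x2 t,
      Fop (k0 s) (q0 s) (q1 s) (p0 s) (c0 s) (c1 s) (η s) (g s) (d s) (h s)
        (fun a b => u 0 a b t) (fun a b => u 1 a b t) x1 x2 =
      biaffine (g s * δ 1 1 t + h s * δ 1 2 t + η s * δ 0 1 t + d s * δ 0 2 t)
        (h s * δ 1 3 t + d s * δ 0 3 t) (g s * δ 1 3 t + η s * δ 0 3 t) 0 x1 x2 := by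
    intro s x1 x2 t
    simp only [hu_biaffine]
    exact Fop_biaffine ..
  simp only [hdt, hF]
  constructor
  · intro H s t
    exact biaffine_eq_biaffine_iff.1 fun x1 x2 => H s x1 x2 t
  · intro H s x1 x2 t
    exact biaffine_eq_biaffine_iff.2 (H s t) x1 x2
end

section
/- Let F_1, F_2 be the coupled diffusion–convection operators defined in the context, with arbitrary real parameters. For any real constants δ_{s,i} (s = 1,2; i = 1,2,3,4), let u_s : ℝ² → ℝ be the bilinear function u_s(x_1,x_2) = δ_{s,1} + δ_{s,2}x_1 + δ_{s,3}x_2 + δ_{s,4}x_1x_2. Then for s = 1,2 and all (x_1,x_2) ∈ ℝ², F_s(u_1,u_2)(x_1,x_2) = (g_{s0}δ_{2,2} + h_{s0}δ_{2,3} + η_{s0}δ_{1,2} + d_{s0}δ_{1,3}) + (h_{s0}δ_{2,4} + d_{s0}δ_{1,4})x_1 + (g_{s0}δ_{2,4} + η_{s0}δ_{1,4})x_2. In particular, the product linear space Span{1, x_1, x_2, x_1x_2} × Span{1, x_1, x_2, x_1x_2} is invariant under the vector operator (F_1, F_2). -/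
def bilin (c : Fin 4 → ℝ) : ℝ → ℝ → ℝ := fun a b => c 0 + c 1 * a + c 2 * b + c 3 * a * b

lemma pd1_bilin (c : Fin 4 → ℝ) : pd1 (bilin c) = fun _ b => c 1 + c 3 * b := by
  funext a b
  have hline : (fun y => bilin c y b) = fun y => (c 0 + c 2 * b) + (c 1 + c 3 * b) * y := by
    funext y; simp only [bilin]; ring
  simp [pd1, hline]

lemma pd2_bilin (c : Fin 4 → ℝ) : pd2 (bilin c) = fun a _ => c 2 + c 3 * a := by
  funext a b
  have hline : (fun y => bilin c a y) = fun y => (c 0 + c 1 * a) + (c 2 + c 3 * a) * y := by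
    funext y; simp only [bilin]; ring
  simp [pd2, hline]

lemma pd1_eq_zero_of_indep_fst (f : ℝ → ℝ) : pd1 (fun _ b => f b) = 0 := by
  funext a b; simp [pd1]

lemma pd2_eq_zero_of_indep_snd (f : ℝ → ℝ) : pd2 (fun a _ => f a) = 0 := by
  funext a b; simp [pd2]

lemma Fop_bilin (K Q0 Q1 P C0 C1 E G D H : ℝ) (u v : Fin 4 → ℝ) :
    Fop K Q0 Q1 P C0 C1 E G D H (bilin u) (bilin v) =
      bilin ![G * v 1 + H * v 2 + E * u 1 + D * u 2, H * v 3 + D * u 3, G * v 3 + E * u 3, 0] := by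
  have flux1 : (fun a b => (K - Q1 * bilin v a b) * pd1 (bilin u) a b +
      (Q1 * bilin u a b + Q0) * pd1 (bilin v) a b) = fun _ b =>
      (K - Q1 * (v 0 + v 2 * b)) * (u 1 + u 3 * b) +
        (Q1 * (u 0 + u 2 * b) + Q0) * (v 1 + v 3 * b) := by
    funext a b; simp only [bilin, pd1_bilin]; ring
  have flux2 : (fun a b => (P - C1 * bilin v a b) * pd2 (bilin u) a b +
      (C1 * bilin u a b + C0) * pd2 (bilin v) a b) = fun a _ =>
      (P - C1 * (v 0 + v 1 * a)) * (u 2 + u 3 * a) +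
        (C1 * (u 0 + u 1 * a) + C0) * (v 2 + v 3 * a) := by
    funext a b; simp only [bilin, pd2_bilin]; ring
  funext a b
  simp only [Fop]
  rw [flux1, flux2, pd1_eq_zero_of_indep_fst, pd2_eq_zero_of_indep_snd]
  simp only [pd1_bilin, pd2_bilin, bilin, Pi.zero_apply, Matrix.cons_val_zero, Matrix.cons_val_one,
    Matrix.cons_val]
  ring

lemma mem_span_monomials_iff {u : ℝ → ℝ → ℝ} :
    u ∈ Submodule.span ℝ
        ({fun _ _ => (1 : ℝ), fun a _ => a, fun _ b => b, fun a b => a * b} : Set (ℝ → ℝ → ℝ)) ↔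
      ∃ c, u = bilin c := by
  have hrange :
      ({fun _ _ => (1 : ℝ), fun a _ => a, fun _ b => b, fun a b => a * b} : Set (ℝ → ℝ → ℝ)) =
      Set.range ![fun _ _ => (1 : ℝ), fun a _ => a, fun _ b => b, fun a b => a * b] := by
    simp only [Matrix.range_cons, Matrix.range_empty, Set.union_empty, Set.singleton_union]
  rw [hrange, Submodule.mem_span_range_iff_exists_fun]
  refine exists_congr fun c => ⟨fun h => ?_, fun h => ?_⟩ <;>
  · subst h
    funext a b
    simp only [bilin, Finset.sum_apply, Fin.sum_univ_four, Pi.smul_apply, smul_eq_mul,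
      Matrix.cons_val_zero, Matrix.cons_val_one, Matrix.cons_val, mul_one]
    ring

/-- `F_s` maps bilinear functions to the stated bilinear function; in particular
`Span{1,x₁,x₂,x₁x₂} × Span{1,x₁,x₂,x₁x₂}` is invariant under `(F_1, F_2)`. -/
theorem stmt_5 (k0 q0 q1 p0 c0 c1 η g d h : Fin 2 → ℝ) (δ : Fin 2 → Fin 4 → ℝ) :
    (∀ (s : Fin 2) (x1 x2 : ℝ),
      Fop (k0 s) (q0 s) (q1 s) (p0 s) (c0 s) (c1 s) (η s) (g s) (d s) (h s)
        (fun a b => δ 0 0 + δ 0 1 * a + δ 0 2 * b + δ 0 3 * a * b)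
        (fun a b => δ 1 0 + δ 1 1 * a + δ 1 2 * b + δ 1 3 * a * b) x1 x2 =
      (g s * δ 1 1 + h s * δ 1 2 + η s * δ 0 1 + d s * δ 0 2) +
      (h s * δ 1 3 + d s * δ 0 3) * x1 + (g s * δ 1 3 + η s * δ 0 3) * x2) ∧
    (∀ u1 u2 : ℝ → ℝ → ℝ,
      u1 ∈ Submodule.span ℝ
        ({fun _ _ => (1 : ℝ), fun a _ => a, fun _ b => b, fun a b => a * b} :
          Set (ℝ → ℝ → ℝ)) →
      u2 ∈ Submodule.span ℝ
        ({fun _ _ => (1 : ℝ), fun a _ => a, fun _ b => b, fun a b => a * b} :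
          Set (ℝ → ℝ → ℝ)) →
      ∀ s : Fin 2,
        Fop (k0 s) (q0 s) (q1 s) (p0 s) (c0 s) (c1 s) (η s) (g s) (d s) (h s) u1 u2 ∈
          Submodule.span ℝ
            ({fun _ _ => (1 : ℝ), fun a _ => a, fun _ b => b, fun a b => a * b} :
              Set (ℝ → ℝ → ℝ))) := by
  refine ⟨fun s x1 x2 => ?_, fun u1 u2 hu1 hu2 s => ?_⟩
  · exact (congrFun₂ (Fop_bilin _ _ _ _ _ _ _ _ _ _ (δ 0) (δ 1)) x1 x2).trans (by simp [bilin])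
  · obtain ⟨u, rfl⟩ := mem_span_monomials_iff.mp hu1
    obtain ⟨v, rfl⟩ := mem_span_monomials_iff.mp hu2
    exact mem_span_monomials_iff.mpr ⟨_, Fop_bilin ..⟩
end

section
/- Let F_1, F_2 be the coupled diffusion–convection operators defined in the context, with arbitrary real parameters, and let A_{s,i} ∈ ℝ (s = 1,2; i = 1,2,3,4). Define μ_s = h_{s0}A_{2,4} + d_{s0}A_{1,4}, γ_s = g_{s0}A_{2,4} + η_{s0}A_{1,4}, l_s = g_{s0}A_{2,2} + h_{s0}A_{2,3} + d_{s0}A_{1,3} + η_{s0}A_{1,2}, ρ_{s,1} = d_{s0}γ_1 + η_{s0}μ_1, ρ_{s,2} = g_{s0}μ_2 + h_{s0}γ_2. Then the functions u_s(x_1,x_2,t) = [A_{s,1} + l_s t + (ρ_{s,1}+ρ_{s,2})t²/2] + [A_{s,2} + μ_s t]x_1 + [A_{s,3} + γ_s t]x_2 + A_{s,4}x_1x_2 satisfy, for all (x_1,x_2,t) ∈ ℝ³ and s = 1,2, ∂u_s/∂t(x_1,x_2,t) = F_s(u_1(·,·,t), u_2(·,·,t))(x_1,x_2), together with the initial condition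 u_s(x_1,x_2,0) = A_{s,1} + A_{s,2}x_1 + A_{s,3}x_2 + A_{s,4}x_1x_2. -/
/-- The analytical solution of Example 3.1 for α₁ = α₂ = 1. -/
theorem stmt_6 (k0 q0 q1 p0 c0 c1 η g d h : Fin 2 → ℝ) (A : Fin 2 → Fin 4 → ℝ)
    (μ γ l ρ1 ρ2 : Fin 2 → ℝ)
    (hμ : ∀ s, μ s = h s * A 1 3 + d s * A 0 3)
    (hγ : ∀ s, γ s = g s * A 1 3 + η s * A 0 3)
    (hl : ∀ s, l s = g s * A 1 1 + h s * A 1 2 + d s * A 0 2 + η s * A 0 1)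
    (hρ1 : ∀ s, ρ1 s = d s * γ 0 + η s * μ 0)
    (hρ2 : ∀ s, ρ2 s = g s * μ 1 + h s * γ 1)
    (u : Fin 2 → ℝ → ℝ → ℝ → ℝ)
    (hu : ∀ s x1 x2 t, u s x1 x2 t =
      (A s 0 + l s * t + (ρ1 s + ρ2 s) * t ^ 2 / 2) + (A s 1 + μ s * t) * x1 +
      (A s 2 + γ s * t) * x2 + A s 3 * x1 * x2) :
    ∀ (s : Fin 2) (x1 x2 t : ℝ),
      (deriv (fun τ => u s x1 x2 τ) t =
        Fop (k0 s) (q0 s) (q1 s) (p0 s) (c0 s) (c1 s) (η s) (g s) (d s) (h s)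
          (fun a b => u 0 a b t) (fun a b => u 1 a b t) x1 x2) ∧
      u s x1 x2 0 = A s 0 + A s 1 * x1 + A s 2 * x2 + A s 3 * x1 * x2 := by
  intro s x1 x2 t
  have e1 : ∀ (i : Fin 2) (b : ℝ), (deriv fun y => u i y b t) =
      fun _ => (A i 1 + μ i * t) + A i 3 * b := by
    intro i b
    funext x
    have hf : (fun y => u i y b t) =
        fun y => ((A i 0 + l i * t + (ρ1 i + ρ2 i) * t ^ 2 / 2) + (A i 2 + γ i * t) * b) +
          ((A i 1 + μ i * t) + A i 3 * b) * y := by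
      funext y; rw [hu]; ring
    rw [hf]
    have := (((hasDerivAt_id x).const_mul ((A i 1 + μ i * t) + A i 3 * b)).const_add
      ((A i 0 + l i * t + (ρ1 i + ρ2 i) * t ^ 2 / 2) + (A i 2 + γ i * t) * b)).deriv
    simpa using this
  have e2 : ∀ (i : Fin 2) (a : ℝ), (deriv fun y => u i a y t) =
      fun _ => (A i 2 + γ i * t) + A i 3 * a := by
    intro i a
    funext x
    have hf : (fun y => u i a y t) =
        fun y => ((A i 0 + l i * t + (ρ1 i + ρ2 i) * t ^ 2 / 2) + (A i 1 + μ i * t) * a) +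
          ((A i 2 + γ i * t) + A i 3 * a) * y := by
      funext y; rw [hu]; ring
    rw [hf]
    have := (((hasDerivAt_id x).const_mul ((A i 2 + γ i * t) + A i 3 * a)).const_add
      ((A i 0 + l i * t + (ρ1 i + ρ2 i) * t ^ 2 / 2) + (A i 1 + μ i * t) * a)).deriv
    simpa using this
  refine ⟨?_, by rw [hu]; ring⟩
  have lhs : deriv (fun τ => u s x1 x2 τ) t =
      (l s + μ s * x1 + γ s * x2) + (ρ1 s + ρ2 s) * t := by
    have hf : (fun τ => u s x1 x2 τ) =
        fun τ => (A s 0 + A s 1 * x1 + A s 2 * x2 + A s 3 * x1 * x2) +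
          ((l s + μ s * x1 + γ s * x2) * τ + (ρ1 s + ρ2 s) * (τ ^ 2 / 2)) := by
      funext τ; rw [hu]; ring
    rw [hf]
    have hd := ((((hasDerivAt_id t).const_mul (l s + μ s * x1 + γ s * x2)).add
      (((hasDerivAt_pow 2 t).div_const 2).const_mul (ρ1 s + ρ2 s))).const_add
      (A s 0 + A s 1 * x1 + A s 2 * x2 + A s 3 * x1 * x2)).deriv
    simp only [id_eq, Pi.add_apply] at hd
    rw [hd]; push_cast; ring
  rw [lhs]
  simp only [Fop, pd1, pd2, e1, e2]
  have hc1 : (fun y => (k0 s - q1 s * u 1 y x2 t) * (A 0 1 + μ 0 * t + A 0 3 * x2) +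
      (q1 s * u 0 y x2 t + q0 s) * (A 1 1 + μ 1 * t + A 1 3 * x2)) =
      fun _ : ℝ => (k0 s - q1 s * u 1 x1 x2 t) * (A 0 1 + μ 0 * t + A 0 3 * x2) +
      (q1 s * u 0 x1 x2 t + q0 s) * (A 1 1 + μ 1 * t + A 1 3 * x2) := by
    funext a; simp only [hu]; ring
  have hc2 : (fun y => (p0 s - c1 s * u 1 x1 y t) * (A 0 2 + γ 0 * t + A 0 3 * x1) +
      (c1 s * u 0 x1 y t + c0 s) * (A 1 2 + γ 1 * t + A 1 3 * x1)) =
      fun _ : ℝ => (p0 s - c1 s * u 1 x1 x2 t) * (A 0 2 + γ 0 * t + A 0 3 * x1) +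
      (c1 s * u 0 x1 x2 t + c0 s) * (A 1 2 + γ 1 * t + A 1 3 * x1) := by
    funext a; simp only [hu]; ring
  rw [hc1, hc2, deriv_const, deriv_const]
  rw [hl s, hμ s, hγ s, hρ1 s, hρ2 s, hμ 0, hμ 1, hγ 0, hγ 1]
  ring
end

section
/- Let F_1, F_2 be the coupled diffusion–convection operators defined in the context, with arbitrary real parameters, and let A_{s,i} ∈ ℝ (s = 1,2; i = 1,2,3,4) and B_{1,i} ∈ ℝ (i = 1,2,3,4). Define μ_s = h_{s0}A_{2,4} + d_{s0}A_{1,4}, γ_s = g_{s0}A_{2,4} + η_{s0}A_{1,4}, l_s = g_{s0}A_{2,2} + h_{s0}A_{2,3} + d_{s0}A_{1,3} + η_{s0}A_{1,2}, ρ_{s,1} = d_{s0}γ_1 + η_{s0}μ_1, ρ_{s,2} = g_{s0}μ_2 + h_{s0}γ_2. Set δ_{1,4}(t) = A_{1,4} + B_{1,4}t, δ_{2,4}(t) = A_{2,4}, δ_{1,2}(t) = A_{1,2} + B_{1,2}t + μ_1 t²/2 + d_{10}B_{1,4}t³/6, δ_{2,2}(t) = A_{2,2} + μ_2 t + d_{20}B_{1,4}t²/2,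 δ_{1,3}(t) = A_{1,3} + B_{1,3}t + γ_1 t²/2 + η_{10}B_{1,4}t³/6, δ_{2,3}(t) = A_{2,3} + γ_2 t + η_{20}B_{1,4}t²/2, δ_{1,1}(t) = A_{1,1} + B_{1,1}t + l_1 t²/2 + [(η_{10}B_{1,2} + d_{10}B_{1,3}) + ρ_{1,2}]t³/6 + [ρ_{1,1} + (g_{10}d_{20} + η_{20}h_{10})B_{1,4}]t⁴/24 + d_{10}η_{10}B_{1,4}t⁵/60, and δ_{2,1}(t) = A_{2,1} + l_2 t + [(η_{20}B_{1,2} + d_{20}B_{1,3}) + ρ_{2,2}]t²/2 + [ρ_{2,1} + (g_{20}d_{20} + h_{20}η_{20})B_{1,4}]t³/6 + (d_{20}η_{10} + d_{10}η_{20})B_{1,4}t⁴/24. Then the functions u_s(x_1,x_2,t) = δ_{s,1}(t) + δ_{s,2}(t)x_1 + δ_{s,3}(t)x_2 + δ_{s,4}(t)x_1x_2 satisfy, for all (x_1,x_2,t) ∈ ℝ³, the mixed-order system ∂²u_1/∂t²(x_1,x_2,t) = F_1(u_1(·,·,t), u_2(·,·,t))(x_1,x_2) and ∂u_2/∂t(x_1,x_2,t)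 = F_2(u_1(·,·,t), u_2(·,·,t))(x_1,x_2). -/
lemma deriv_affine (f : ℝ → ℝ) (a b x : ℝ) (hf : ∀ y, f y = a + b * y) :
    deriv f x = b := by
  have h2 : HasDerivAt (fun y : ℝ => a + b * y) (b * 1) x :=
    ((hasDerivAt_id x).const_mul b).const_add a
  rw [funext hf]
  simpa using h2.deriv

lemma hasDerivAt_poly5 (c0 c1 c2 c3 c4 c5 x : ℝ) :
    HasDerivAt (fun y : ℝ => c0 + c1*y^1 + c2*y^2 + c3*y^3 + c4*y^4 + c5*y^5)
      (c1 + 2*c2*x + 3*c3*x^2 + 4*c4*x^3 + 5*c5*x^4) x := by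
  have h := (((((hasDerivAt_const x c0).add ((hasDerivAt_pow 1 x).const_mul c1)).add
      ((hasDerivAt_pow 2 x).const_mul c2)).add ((hasDerivAt_pow 3 x).const_mul c3)).add
      ((hasDerivAt_pow 4 x).const_mul c4)).add ((hasDerivAt_pow 5 x).const_mul c5)
  refine h.congr_deriv ?_
  push_cast
  ring

lemma deriv_poly5 (f : ℝ → ℝ) (c0 c1 c2 c3 c4 c5 x : ℝ)
    (hf : ∀ y, f y = c0 + c1*y^1 + c2*y^2 + c3*y^3 + c4*y^4 + c5*y^5) :
    deriv f x = c1 + 2*c2*x + 3*c3*x^2 + 4*c4*x^3 + 5*c5*x^4 := by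
  rw [funext hf]
  exact (hasDerivAt_poly5 c0 c1 c2 c3 c4 c5 x).deriv

lemma deriv2_poly5 (f : ℝ → ℝ) (c0 c1 c2 c3 c4 c5 x : ℝ)
    (hf : ∀ y, f y = c0 + c1*y^1 + c2*y^2 + c3*y^3 + c4*y^4 + c5*y^5) :
    deriv (fun τ => deriv f τ) x = 2*c2 + 6*c3*x + 12*c4*x^2 + 20*c5*x^3 := by
  have h1 : ∀ τ, deriv f τ = c1 + (2*c2)*τ^1 + (3*c3)*τ^2 + (4*c4)*τ^3 + (5*c5)*τ^4 + 0*τ^5 := by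
    intro τ; rw [deriv_poly5 f c0 c1 c2 c3 c4 c5 τ hf]; ring
  rw [deriv_poly5 (fun τ => deriv f τ) c1 (2*c2) (3*c3) (4*c4) (5*c5) 0 x h1]
  ring


/-- The analytical solution of Example 3.1 in the mixed case α₁ = 2, α₂ = 1:
`u₁` obeys a wave-type equation and `u₂` a diffusion-type equation. -/
theorem stmt_8 (k0 q0 q1 p0 c0 c1 η g d h : Fin 2 → ℝ)
    (A : Fin 2 → Fin 4 → ℝ) (B : Fin 4 → ℝ)
    (μ γ l ρ1 ρ2 : Fin 2 → ℝ)
    (hμ : ∀ s, μ s = h s * A 1 3 + d s * A 0 3)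
    (hγ : ∀ s, γ s = g s * A 1 3 + η s * A 0 3)
    (hl : ∀ s, l s = g s * A 1 1 + h s * A 1 2 + d s * A 0 2 + η s * A 0 1)
    (hρ1 : ∀ s, ρ1 s = d s * γ 0 + η s * μ 0)
    (hρ2 : ∀ s, ρ2 s = g s * μ 1 + h s * γ 1)
    (δ : Fin 2 → Fin 4 → ℝ → ℝ)
    (hδ14 : ∀ t, δ 0 3 t = A 0 3 + B 3 * t)
    (hδ24 : ∀ t, δ 1 3 t = A 1 3)
    (hδ12 : ∀ t, δ 0 1 t = A 0 1 + B 1 * t + μ 0 * t ^ 2 / 2 + d 0 * B 3 * t ^ 3 / 6)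
    (hδ22 : ∀ t, δ 1 1 t = A 1 1 + μ 1 * t + d 1 * B 3 * t ^ 2 / 2)
    (hδ13 : ∀ t, δ 0 2 t = A 0 2 + B 2 * t + γ 0 * t ^ 2 / 2 + η 0 * B 3 * t ^ 3 / 6)
    (hδ23 : ∀ t, δ 1 2 t = A 1 2 + γ 1 * t + η 1 * B 3 * t ^ 2 / 2)
    (hδ11 : ∀ t, δ 0 0 t = A 0 0 + B 0 * t + l 0 * t ^ 2 / 2 +
      ((η 0 * B 1 + d 0 * B 2) + ρ2 0) * t ^ 3 / 6 +
      (ρ1 0 + (g 0 * d 1 + η 1 * h 0) * B 3) * t ^ 4 / 24 +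
      d 0 * η 0 * B 3 * t ^ 5 / 60)
    (hδ21 : ∀ t, δ 1 0 t = A 1 0 + l 1 * t +
      ((η 1 * B 1 + d 1 * B 2) + ρ2 1) * t ^ 2 / 2 +
      (ρ1 1 + (g 1 * d 1 + h 1 * η 1) * B 3) * t ^ 3 / 6 +
      (d 1 * η 0 + d 0 * η 1) * B 3 * t ^ 4 / 24)
    (u : Fin 2 → ℝ → ℝ → ℝ → ℝ)
    (hu : ∀ s x1 x2 t, u s x1 x2 t =
      δ s 0 t + δ s 1 t * x1 + δ s 2 t * x2 + δ s 3 t * x1 * x2) :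
    ∀ (x1 x2 t : ℝ),
      (deriv (fun τ => deriv (fun σ => u 0 x1 x2 σ) τ) t =
        Fop (k0 0) (q0 0) (q1 0) (p0 0) (c0 0) (c1 0) (η 0) (g 0) (d 0) (h 0)
          (fun a b => u 0 a b t) (fun a b => u 1 a b t) x1 x2) ∧
      (deriv (fun τ => u 1 x1 x2 τ) t =
        Fop (k0 1) (q0 1) (q1 1) (p0 1) (c0 1) (c1 1) (η 1) (g 1) (d 1) (h 1)
          (fun a b => u 0 a b t) (fun a b => u 1 a b t) x1 x2) := by
  intro x1 x2 t
  -- spatial partial derivatives of u at fixed t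
  have e1 : ∀ a b : ℝ, deriv (fun y => u 0 y b t) a = δ 0 1 t + δ 0 3 t * b := fun a b =>
    deriv_affine _ (δ 0 0 t + δ 0 2 t * b) _ a (fun y => by rw [hu]; ring)
  have e2 : ∀ a b : ℝ, deriv (fun y => u 1 y b t) a = δ 1 1 t + δ 1 3 t * b := fun a b =>
    deriv_affine _ (δ 1 0 t + δ 1 2 t * b) _ a (fun y => by rw [hu]; ring)
  have e3 : ∀ a b : ℝ, deriv (fun y => u 0 a y t) b = δ 0 2 t + δ 0 3 t * a := fun a b =>
    deriv_affine _ (δ 0 0 t + δ 0 1 t * a) _ b (fun y => by rw [hu]; ring)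
  have e4 : ∀ a b : ℝ, deriv (fun y => u 1 a y t) b = δ 1 2 t + δ 1 3 t * a := fun a b =>
    deriv_affine _ (δ 1 0 t + δ 1 1 t * a) _ b (fun y => by rw [hu]; ring)
  have z1 : ∀ s : Fin 2, deriv (fun y =>
      (k0 s - q1 s * u 1 y x2 t) * (δ 0 1 t + δ 0 3 t * x2) +
      (q1 s * u 0 y x2 t + q0 s) * (δ 1 1 t + δ 1 3 t * x2)) x1 = 0 := fun s =>
    deriv_affine _
      ((k0 s - q1 s * (δ 1 0 t + δ 1 2 t * x2)) * (δ 0 1 t + δ 0 3 t * x2) +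
       (q1 s * (δ 0 0 t + δ 0 2 t * x2) + q0 s) * (δ 1 1 t + δ 1 3 t * x2)) 0 x1
      (fun y => by simp only [hu]; ring)
  have z2 : ∀ s : Fin 2, deriv (fun y =>
      (p0 s - c1 s * u 1 x1 y t) * (δ 0 2 t + δ 0 3 t * x1) +
      (c1 s * u 0 x1 y t + c0 s) * (δ 1 2 t + δ 1 3 t * x1)) x2 = 0 := fun s =>
    deriv_affine _
      ((p0 s - c1 s * (δ 1 0 t + δ 1 1 t * x1)) * (δ 0 2 t + δ 0 3 t * x1) +
       (c1 s * (δ 0 0 t + δ 0 1 t * x1) + c0 s) * (δ 1 2 t + δ 1 3 t * x1)) 0 x2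
      (fun y => by simp only [hu]; ring)
  have hU0 : ∀ y : ℝ, u 0 x1 x2 y =
      (A 0 0 + A 0 1 * x1 + A 0 2 * x2 + A 0 3 * x1 * x2) +
      (B 0 + B 1 * x1 + B 2 * x2 + B 3 * x1 * x2) * y ^ 1 +
      (l 0 / 2 + μ 0 * x1 / 2 + γ 0 * x2 / 2) * y ^ 2 +
      (((η 0 * B 1 + d 0 * B 2) + ρ2 0) / 6 + d 0 * B 3 * x1 / 6 + η 0 * B 3 * x2 / 6) * y ^ 3 +
      ((ρ1 0 + (g 0 * d 1 + η 1 * h 0) * B 3) / 24) * y ^ 4 +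
      (d 0 * η 0 * B 3 / 60) * y ^ 5 := by
    intro y
    rw [hu, hδ11, hδ12, hδ13, hδ14]
    ring
  have hU1 : ∀ y : ℝ, u 1 x1 x2 y =
      (A 1 0 + A 1 1 * x1 + A 1 2 * x2 + A 1 3 * x1 * x2) +
      (l 1 + μ 1 * x1 + γ 1 * x2) * y ^ 1 +
      (((η 1 * B 1 + d 1 * B 2) + ρ2 1) / 2 + d 1 * B 3 * x1 / 2 + η 1 * B 3 * x2 / 2) * y ^ 2 +
      ((ρ1 1 + (g 1 * d 1 + h 1 * η 1) * B 3) / 6) * y ^ 3 +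
      ((d 1 * η 0 + d 0 * η 1) * B 3 / 24) * y ^ 4 +
      0 * y ^ 5 := by
    intro y
    rw [hu, hδ21, hδ22, hδ23, hδ24]
    ring
  constructor
  · rw [deriv2_poly5 _ _ _ _ _ _ _ t hU0]
    simp only [Fop, pd1, pd2, e1, e2, e3, e4]
    rw [z1 0, z2 0]
    simp only [hδ11, hδ12, hδ13, hδ14, hδ21, hδ22, hδ23, hδ24, hμ, hγ, hl, hρ1, hρ2]
    ring
  · rw [deriv_poly5 _ _ _ _ _ _ _ t hU1]
    simp only [Fop, pd1, pd2, e1, e2, e3, e4]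
    rw [z1 1, z2 1]
    simp only [hδ11, hδ12, hδ13, hδ14, hδ21, hδ22, hδ23, hδ24, hμ, hγ, hl, hρ1, hρ2]
    ring
end

section
/- Let F_1, F_2 be the coupled diffusion–convection operators defined in the context, with arbitrary real parameters, and let b_{10} > 0, b_{20} > 0. Let V be the ℝ-linear span of the four functions (x_1,x_2) ↦ sin(√b_{10} x_1)sin(√b_{20} x_2), cos(√b_{10} x_1)sin(√b_{20} x_2), sin(√b_{10} x_1)cos(√b_{20} x_2), cos(√b_{10} x_1)cos(√b_{20} x_2). Then for all u_1, u_2 ∈ V and s = 1,2, the nonlinear terms cancel: F_s(u_1,u_2) = k_{s0}(∂²u_1/∂x_1²) + q_{s0}(∂²u_2/∂x_1²) + p_{s0}(∂²u_1/∂x_2²) + c_{s0}(∂²u_2/∂x_2²) + η_{s0}(∂u_1/∂x_1) + g_{s0}(∂u_2/∂x_1) + d_{s0}(∂u_1/∂x_2) + h_{s0}(∂u_2/∂x_2), and consequently F_s(u_1,u_2) ∈ V; i.e., the product linear space V × V is invariant under (F_1, F_2). -/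
/-! ### Auxiliary lemmas -/

lemma deriv_trig (p q r c x : ℝ) :
    deriv (fun y => p * Real.sin (c*y) + q * Real.cos (c*y) + r) x
      = p * c * Real.cos (c*x) - q * c * Real.sin (c*x) := by
  have h1 : HasDerivAt (fun y : ℝ => c * y) c x := by
    simpa using (hasDerivAt_id x).const_mul c
  have hs : HasDerivAt (fun y => Real.sin (c*y)) (Real.cos (c*x) * c) x :=
    (Real.hasDerivAt_sin (c*x)).comp x h1
  have hc : HasDerivAt (fun y => Real.cos (c*y)) (-Real.sin (c*x) * c) x :=
    (Real.hasDerivAt_cos (c*x)).comp x h1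
  have hh : deriv (fun y => p * Real.sin (c*y) + q * Real.cos (c*y) + r) x
      = p * (Real.cos (c*x) * c) + q * (-Real.sin (c*x) * c) :=
    (((hs.const_mul p).add (hc.const_mul q)).add_const r).deriv
  rw [hh]; ring

/-- A generic element of the four-dimensional trigonometric space. -/
noncomputable def Tf (a b A B C D : ℝ) : ℝ → ℝ → ℝ := fun x1 x2 =>
  A * Real.sin (a*x1) * Real.sin (b*x2) + B * Real.cos (a*x1) * Real.sin (b*x2)
  + C * Real.sin (a*x1) * Real.cos (b*x2) + D * Real.cos (a*x1) * Real.cos (b*x2)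

lemma pd1_T (a b A B C D : ℝ) :
    pd1 (Tf a b A B C D) = Tf a b (-(a*B)) (a*A) (-(a*D)) (a*C) := by
  funext x1 x2
  show deriv (fun y => Tf a b A B C D y x2) x1 = _
  rw [show (fun y => Tf a b A B C D y x2)
      = fun y => (A * Real.sin (b*x2) + C * Real.cos (b*x2)) * Real.sin (a*y)
          + (B * Real.sin (b*x2) + D * Real.cos (b*x2)) * Real.cos (a*y) + 0 from
    funext fun y => by simp only [Tf]; ring]
  rw [deriv_trig]; simp only [Tf]; ring

lemma pd2_T (a b A B C D : ℝ) :
    pd2 (Tf a b A B C D) = Tf a b (-(b*C)) (-(b*D)) (b*A) (b*B) := by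
  funext x1 x2
  show deriv (fun y => Tf a b A B C D x1 y) x2 = _
  rw [show (fun y => Tf a b A B C D x1 y)
      = fun y => (A * Real.sin (a*x1) + B * Real.cos (a*x1)) * Real.sin (b*y)
          + (C * Real.sin (a*x1) + D * Real.cos (a*x1)) * Real.cos (b*y) + 0 from
    funext fun y => by simp only [Tf]; ring]
  rw [deriv_trig]; simp only [Tf]; ring

/-- The essential Wronskian cancellation: for two one-dimensional trigonometric
functions of the same frequency, the nonlinear combination reduces to a linear one. -/
lemma key1 (a k0 q0 q1 P1 Q1 P2 Q2 x : ℝ) :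
    deriv (fun y => (k0 - q1 * (P2 * Real.sin (a*y) + Q2 * Real.cos (a*y)))
        * (a*(P1 * Real.cos (a*y) - Q1 * Real.sin (a*y)))
      + (q1 * (P1 * Real.sin (a*y) + Q1 * Real.cos (a*y)) + q0)
        * (a*(P2 * Real.cos (a*y) - Q2 * Real.sin (a*y)))) x
    = -(a*a) * (k0 * (P1*Real.sin (a*x) + Q1*Real.cos (a*x))
        + q0 * (P2*Real.sin (a*x) + Q2*Real.cos (a*x))) := by
  rw [show (fun y => (k0 - q1 * (P2 * Real.sin (a*y) + Q2 * Real.cos (a*y)))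
        * (a*(P1 * Real.cos (a*y) - Q1 * Real.sin (a*y)))
      + (q1 * (P1 * Real.sin (a*y) + Q1 * Real.cos (a*y)) + q0)
        * (a*(P2 * Real.cos (a*y) - Q2 * Real.sin (a*y))))
      = fun y => (-(a*(k0*Q1+q0*Q2))) * Real.sin (a*y) + (a*(k0*P1+q0*P2)) * Real.cos (a*y)
          + q1*a*(Q1*P2 - P1*Q2) from
    funext fun y => by linear_combination (q1*a*(Q1*P2 - P1*Q2)) * Real.sin_sq_add_cos_sq (a*y)]
  rw [deriv_trig]; ring

/-- On the trigonometric family the operator `Fop` acts linearly. -/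
lemma Fop_T (a b k0 q0 q1 p0 c0 c1 e0 g0 d0 h0 A1 B1 C1 D1 A2 B2 C2 D2 x1 x2 : ℝ) :
    Fop k0 q0 q1 p0 c0 c1 e0 g0 d0 h0 (Tf a b A1 B1 C1 D1) (Tf a b A2 B2 C2 D2) x1 x2 =
      k0 * pd1 (pd1 (Tf a b A1 B1 C1 D1)) x1 x2 + q0 * pd1 (pd1 (Tf a b A2 B2 C2 D2)) x1 x2 +
      p0 * pd2 (pd2 (Tf a b A1 B1 C1 D1)) x1 x2 + c0 * pd2 (pd2 (Tf a b A2 B2 C2 D2)) x1 x2 +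
      e0 * pd1 (Tf a b A1 B1 C1 D1) x1 x2 + g0 * pd1 (Tf a b A2 B2 C2 D2) x1 x2 +
      d0 * pd2 (Tf a b A1 B1 C1 D1) x1 x2 + h0 * pd2 (Tf a b A2 B2 C2 D2) x1 x2 := by
  have e1 : pd1 (fun p q => (k0 - q1 * Tf a b A2 B2 C2 D2 p q) * pd1 (Tf a b A1 B1 C1 D1) p q
        + (q1 * Tf a b A1 B1 C1 D1 p q + q0) * pd1 (Tf a b A2 B2 C2 D2) p q) x1 x2
      = k0 * pd1 (pd1 (Tf a b A1 B1 C1 D1)) x1 x2 + q0 * pd1 (pd1 (Tf a b A2 B2 C2 D2)) x1 x2 := by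
    simp only [pd1_T]
    show deriv (fun y => (k0 - q1 * Tf a b A2 B2 C2 D2 y x2)
          * Tf a b (-(a*B1)) (a*A1) (-(a*D1)) (a*C1) y x2
        + (q1 * Tf a b A1 B1 C1 D1 y x2 + q0)
          * Tf a b (-(a*B2)) (a*A2) (-(a*D2)) (a*C2) y x2) x1 = _
    rw [show (fun y => (k0 - q1 * Tf a b A2 B2 C2 D2 y x2)
          * Tf a b (-(a*B1)) (a*A1) (-(a*D1)) (a*C1) y x2
        + (q1 * Tf a b A1 B1 C1 D1 y x2 + q0)
          * Tf a b (-(a*B2)) (a*A2) (-(a*D2)) (a*C2) y x2)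
        = fun y => (k0 - q1 * ((A2*Real.sin (b*x2)+C2*Real.cos (b*x2)) * Real.sin (a*y)
              + (B2*Real.sin (b*x2)+D2*Real.cos (b*x2)) * Real.cos (a*y)))
            * (a*((A1*Real.sin (b*x2)+C1*Real.cos (b*x2)) * Real.cos (a*y)
              - (B1*Real.sin (b*x2)+D1*Real.cos (b*x2)) * Real.sin (a*y)))
          + (q1 * ((A1*Real.sin (b*x2)+C1*Real.cos (b*x2)) * Real.sin (a*y)
              + (B1*Real.sin (b*x2)+D1*Real.cos (b*x2)) * Real.cos (a*y)) + q0)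
            * (a*((A2*Real.sin (b*x2)+C2*Real.cos (b*x2)) * Real.cos (a*y)
              - (B2*Real.sin (b*x2)+D2*Real.cos (b*x2)) * Real.sin (a*y))) from
      funext fun y => by simp only [Tf]; ring]
    rw [key1]
    simp only [Tf]; ring
  have e2 : pd2 (fun p q => (p0 - c1 * Tf a b A2 B2 C2 D2 p q) * pd2 (Tf a b A1 B1 C1 D1) p q
        + (c1 * Tf a b A1 B1 C1 D1 p q + c0) * pd2 (Tf a b A2 B2 C2 D2) p q) x1 x2
      = p0 * pd2 (pd2 (Tf a b A1 B1 C1 D1)) x1 x2 + c0 * pd2 (pd2 (Tf a b A2 B2 C2 D2)) x1 x2 := by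
    simp only [pd2_T]
    show deriv (fun y => (p0 - c1 * Tf a b A2 B2 C2 D2 x1 y)
          * Tf a b (-(b*C1)) (-(b*D1)) (b*A1) (b*B1) x1 y
        + (c1 * Tf a b A1 B1 C1 D1 x1 y + c0)
          * Tf a b (-(b*C2)) (-(b*D2)) (b*A2) (b*B2) x1 y) x2 = _
    rw [show (fun y => (p0 - c1 * Tf a b A2 B2 C2 D2 x1 y)
          * Tf a b (-(b*C1)) (-(b*D1)) (b*A1) (b*B1) x1 y
        + (c1 * Tf a b A1 B1 C1 D1 x1 y + c0)
          * Tf a b (-(b*C2)) (-(b*D2)) (b*A2) (b*B2) x1 y)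
        = fun y => (p0 - c1 * ((A2*Real.sin (a*x1)+B2*Real.cos (a*x1)) * Real.sin (b*y)
              + (C2*Real.sin (a*x1)+D2*Real.cos (a*x1)) * Real.cos (b*y)))
            * (b*((A1*Real.sin (a*x1)+B1*Real.cos (a*x1)) * Real.cos (b*y)
              - (C1*Real.sin (a*x1)+D1*Real.cos (a*x1)) * Real.sin (b*y)))
          + (c1 * ((A1*Real.sin (a*x1)+B1*Real.cos (a*x1)) * Real.sin (b*y)
              + (C1*Real.sin (a*x1)+D1*Real.cos (a*x1)) * Real.cos (b*y)) + c0)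
            * (b*((A2*Real.sin (a*x1)+B2*Real.cos (a*x1)) * Real.cos (b*y)
              - (C2*Real.sin (a*x1)+D2*Real.cos (a*x1)) * Real.sin (b*y))) from
      funext fun y => by simp only [Tf]; ring]
    rw [key1]
    simp only [Tf]; ring
  unfold Fop
  rw [e1, e2]; ring

lemma mem_char (a b : ℝ) (u : ℝ → ℝ → ℝ)
    (hu : u ∈ Submodule.span ℝ
      ({fun x1 x2 => Real.sin (a * x1) * Real.sin (b * x2),
        fun x1 x2 => Real.cos (a * x1) * Real.sin (b * x2),
        fun x1 x2 => Real.sin (a * x1) * Real.cos (b * x2),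
        fun x1 x2 => Real.cos (a * x1) * Real.cos (b * x2)} : Set (ℝ → ℝ → ℝ))) :
    ∃ A B C D : ℝ, u = Tf a b A B C D := by
  induction hu using Submodule.span_induction with
  | mem x hx =>
    simp only [Set.mem_insert_iff, Set.mem_singleton_iff] at hx
    rcases hx with rfl | rfl | rfl | rfl
    · exact ⟨1, 0, 0, 0, by funext x1 x2; simp [Tf]⟩
    · exact ⟨0, 1, 0, 0, by funext x1 x2; simp [Tf]⟩
    · exact ⟨0, 0, 1, 0, by funext x1 x2; simp [Tf]⟩
    · exact ⟨0, 0, 0, 1, by funext x1 x2; simp [Tf]⟩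
  | zero => exact ⟨0, 0, 0, 0, by funext x1 x2; simp [Tf]⟩
  | add f g _ _ hf hg =>
    obtain ⟨A, B, C, D, rfl⟩ := hf
    obtain ⟨A', B', C', D', rfl⟩ := hg
    exact ⟨A+A', B+B', C+C', D+D', by funext x1 x2; simp [Tf]; ring⟩
  | smul r f _ hf =>
    obtain ⟨A, B, C, D, rfl⟩ := hf
    exact ⟨r*A, r*B, r*C, r*D, by funext x1 x2; simp [Tf]; ring⟩

lemma T_mem (a b A B C D : ℝ) :
    Tf a b A B C D ∈ Submodule.span ℝ
      ({fun x1 x2 => Real.sin (a * x1) * Real.sin (b * x2),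
        fun x1 x2 => Real.cos (a * x1) * Real.sin (b * x2),
        fun x1 x2 => Real.sin (a * x1) * Real.cos (b * x2),
        fun x1 x2 => Real.cos (a * x1) * Real.cos (b * x2)} : Set (ℝ → ℝ → ℝ)) := by
  have h : Tf a b A B C D =
      A • (fun x1 x2 => Real.sin (a * x1) * Real.sin (b * x2))
      + B • (fun x1 x2 => Real.cos (a * x1) * Real.sin (b * x2))
      + C • (fun x1 x2 => Real.sin (a * x1) * Real.cos (b * x2))
      + D • (fun x1 x2 => Real.cos (a * x1) * Real.cos (b * x2)) := by
    funext x1 x2; simp [Tf]; ring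
  rw [h]
  refine Submodule.add_mem _ (Submodule.add_mem _ (Submodule.add_mem _ ?_ ?_) ?_) ?_ <;>
    exact Submodule.smul_mem _ _ (Submodule.subset_span (by simp))

/-- On the trigonometric product space the nonlinear terms of `F_s` cancel, and
`V × V` is invariant under `(F_1, F_2)` (case 24 of Table 3). -/
theorem stmt_9 (k0 q0 q1 p0 c0 c1 η g d h : Fin 2 → ℝ) (b10 b20 : ℝ)
    (hb10 : 0 < b10) (hb20 : 0 < b20)
    (V : Submodule ℝ (ℝ → ℝ → ℝ))
    (hV : V = Submodule.span ℝ
      ({fun x1 x2 => Real.sin (Real.sqrt b10 * x1) * Real.sin (Real.sqrt b20 * x2),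
        fun x1 x2 => Real.cos (Real.sqrt b10 * x1) * Real.sin (Real.sqrt b20 * x2),
        fun x1 x2 => Real.sin (Real.sqrt b10 * x1) * Real.cos (Real.sqrt b20 * x2),
        fun x1 x2 => Real.cos (Real.sqrt b10 * x1) * Real.cos (Real.sqrt b20 * x2)} :
        Set (ℝ → ℝ → ℝ))) :
    ∀ u1 u2 : ℝ → ℝ → ℝ, u1 ∈ V → u2 ∈ V → ∀ s : Fin 2,
      (∀ x1 x2 : ℝ,
        Fop (k0 s) (q0 s) (q1 s) (p0 s) (c0 s) (c1 s) (η s) (g s) (d s) (h s) u1 u2 x1 x2 =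
          k0 s * pd1 (pd1 u1) x1 x2 + q0 s * pd1 (pd1 u2) x1 x2 +
          p0 s * pd2 (pd2 u1) x1 x2 + c0 s * pd2 (pd2 u2) x1 x2 +
          η s * pd1 u1 x1 x2 + g s * pd1 u2 x1 x2 +
          d s * pd2 u1 x1 x2 + h s * pd2 u2 x1 x2) ∧
      Fop (k0 s) (q0 s) (q1 s) (p0 s) (c0 s) (c1 s) (η s) (g s) (d s) (h s) u1 u2 ∈ V := by
  subst hV
  intro u1 u2 hu1 hu2 s
  obtain ⟨A1, B1, C1, D1, rfl⟩ := mem_char _ _ _ hu1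
  obtain ⟨A2, B2, C2, D2, rfl⟩ := mem_char _ _ _ hu2
  set a := Real.sqrt b10 with ha
  set b := Real.sqrt b20 with hb
  constructor
  · intro x1 x2; exact Fop_T a b _ _ _ _ _ _ _ _ _ _ A1 B1 C1 D1 A2 B2 C2 D2 x1 x2
  · have heq : Fop (k0 s) (q0 s) (q1 s) (p0 s) (c0 s) (c1 s) (η s) (g s) (d s) (h s)
        (Tf a b A1 B1 C1 D1) (Tf a b A2 B2 C2 D2)
        = Tf a b
          (-(a*a)*(k0 s*A1 + q0 s*A2) - b*b*(p0 s*A1 + c0 s*A2)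
            - η s*(a*B1) - g s*(a*B2) - d s*(b*C1) - h s*(b*C2))
          (-(a*a)*(k0 s*B1 + q0 s*B2) - b*b*(p0 s*B1 + c0 s*B2)
            + η s*(a*A1) + g s*(a*A2) - d s*(b*D1) - h s*(b*D2))
          (-(a*a)*(k0 s*C1 + q0 s*C2) - b*b*(p0 s*C1 + c0 s*C2)
            - η s*(a*D1) - g s*(a*D2) + d s*(b*A1) + h s*(b*A2))
          (-(a*a)*(k0 s*D1 + q0 s*D2) - b*b*(p0 s*D1 + c0 s*D2)
            + η s*(a*C1) + g s*(a*C2) + d s*(b*B1) + h s*(b*B2)) := by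
      funext x1 x2
      rw [Fop_T]
      simp only [pd1_T, pd2_T, Tf]; ring
    rw [heq]
    exact T_mem a b _ _ _ _
end

section
/- Let G_1, G_2 be the operators of the polynomial–exponential system defined in the context, with a_{21} ≠ 0. For any real constants δ_{s,i} (s = 1,2; i = 1,2,3,4), let u_1(x_1,x_2) = δ_{1,1} + δ_{1,2}x_1 + (δ_{1,3} + δ_{1,4}x_1)e^{−a_{21}x_2} and u_2(x_1,x_2) = δ_{2,1} + δ_{2,2}x_1 + (δ_{2,3} + δ_{2,4}x_1)x_2. Then, with γ_0 = p_{10}a_{21}² − d_{10}a_{21}, for all (x_1,x_2) ∈ ℝ²: G_1(u_1,u_2)(x_1,x_2) = (η_{10}δ_{1,2} + h_{10}δ_{2,3}) + (h_{10}δ_{2,4})x_1 + [(γ_0δ_{1,3} + η_{10}δ_{1,4}) + (γ_0δ_{1,4})x_1]e^{−a_{21}x_2}, and G_2(u_1,u_2)(x_1,x_2) = (g_{20}δ_{2,2} + h_{20}δ_{2,3}) + (h_{20}δ_{2,4})x_1 + (g_{20}δ_{2,4})x_2. In particular the product linear space Span{1, x_1, e^{−a_{21}x_2}, x_1e^{−a_{21}x_2}}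 × Span{1, x_1, x_2, x_1x_2} is invariant under (G_1, G_2). -/
/-- The first operator `G₁` of the polynomial–exponential system (Example 3.2). -/
noncomputable def Gop1 (k10 q10 q11 p10 c10 d12 d10 e10 h10 a21 : ℝ)
    (u1 u2 : ℝ → ℝ → ℝ) : ℝ → ℝ → ℝ :=
  fun x1 x2 =>
    pd1 (fun a b => (k10 - q11 * u2 a b) * pd1 u1 a b + (q11 * u1 a b + q10) * pd1 u2 a b) x1 x2 +
    pd2 (fun a b => ((d12 / a21) * u2 a b + p10) * pd2 u1 a b +
      (c10 - (d12 / a21) * u1 a b) * pd2 u2 a b) x1 x2 +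
    e10 * pd1 u1 x1 x2 + (d12 * u2 x1 x2 + d10) * pd2 u1 x1 x2 + h10 * pd2 u2 x1 x2

/-- The second operator `G₂` of the polynomial–exponential system (Example 3.2). -/
noncomputable def Gop2 (k20 q20 q21 c20 g20 h20 : ℝ) (u1 u2 : ℝ → ℝ → ℝ) : ℝ → ℝ → ℝ :=
  fun x1 x2 =>
    pd1 (fun a b => (k20 - q21 * u2 a b) * pd1 u1 a b + (q21 * u1 a b + q20) * pd1 u2 a b) x1 x2 +
    c20 * pd2 (pd2 u2) x1 x2 + g20 * pd1 u2 x1 x2 + h20 * pd2 u2 x1 x2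
lemma hdPoly (p q r s c : ℝ) (x : ℝ) :
    HasDerivAt (fun y => p + q*y + (r + s*y)*Real.exp (-c*y))
      (q + s*Real.exp (-c*x) + (r + s*x)*(-c*Real.exp (-c*x))) x := by
  have h1 : HasDerivAt (fun y : ℝ => p + q*y) q x := by
    simpa using ((hasDerivAt_id x).const_mul q).const_add p
  have h2 : HasDerivAt (fun y : ℝ => Real.exp (-c*y)) (-c*Real.exp (-c*x)) x := by
    simpa [mul_comm] using ((hasDerivAt_id x).const_mul (-c)).exp
  have h3 : HasDerivAt (fun y : ℝ => r + s*y) s x := by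
    simpa using ((hasDerivAt_id x).const_mul s).const_add r
  have h4 := h1.add (h3.mul h2)
  refine HasDerivAt.congr_deriv (h4 : HasDerivAt (fun y => p + q*y + (r + s*y)*Real.exp (-c*y)) _ x) ?_
  ring

lemma deriv_shape (f : ℝ → ℝ) (p q r s c x : ℝ)
    (hf : ∀ y, f y = p + q*y + (r+s*y)*Real.exp (-c*y)) :
    deriv f x = q + s*Real.exp (-c*x) + (r+s*x)*(-c*Real.exp (-c*x)) := by
  have hfe : f = fun y => p + q*y + (r+s*y)*Real.exp (-c*y) := funext hf
  rw [hfe]; exact (hdPoly p q r s c x).deriv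

lemma deriv_lin (f : ℝ → ℝ) (p q x : ℝ) (hf : ∀ y, f y = p + q*y) :
    deriv f x = q := by
  have hfe : f = fun y => p + q*y := funext hf
  rw [hfe]
  simpa using (((hasDerivAt_id x).const_mul q).const_add p).deriv

lemma keyG1 (k10 q10 q11 p10 c10 d12 d10 e10 h10 a21 : ℝ) (ha21 : a21 ≠ 0)
    (A B C D P Q R S : ℝ) (u1 u2 : ℝ → ℝ → ℝ)
    (hu1 : ∀ a b, u1 a b = A + B*a + (C + D*a)*Real.exp (-a21*b))
    (hu2 : ∀ a b, u2 a b = P + Q*a + (R + S*a)*b) (x1 x2 : ℝ) :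
    Gop1 k10 q10 q11 p10 c10 d12 d10 e10 h10 a21 u1 u2 x1 x2 =
      (e10*B + h10*R) + (h10*S)*x1 +
      (((p10*a21^2 - d10*a21)*C + e10*D) + ((p10*a21^2 - d10*a21)*D)*x1)*Real.exp (-a21*x2) := by
  have hp1u1 : ∀ a b, pd1 u1 a b = B + D*Real.exp (-a21*b) := fun a b =>
    deriv_lin _ (A + C*Real.exp (-a21*b)) _ a (fun y => by simp only [hu1]; try ring)
  have hp2u1 : ∀ a b, pd2 u1 a b = -a21*(C + D*a)*Real.exp (-a21*b) := by
    intro a b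
    have h := deriv_shape (fun y => u1 a y) (A + B*a) 0 (C + D*a) 0 a21 b
      (fun y => by simp only [hu1]; try ring)
    show deriv (fun y => u1 a y) b = _
    rw [h]; ring
  have hp1u2 : ∀ a b, pd1 u2 a b = Q + S*b := fun a b =>
    deriv_lin _ (P + R*b) _ a (fun y => by simp only [hu2]; try ring)
  have hp2u2 : ∀ a b, pd2 u2 a b = R + S*a := fun a b =>
    deriv_lin _ (P + Q*a) _ b (fun y => by simp only [hu2]; try ring)
  have E := Real.exp (-a21*x2)
  have hT1 : pd1 (fun a b => (k10 - q11 * u2 a b) * pd1 u1 a b +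
      (q11 * u1 a b + q10) * pd1 u2 a b) x1 x2 = 0 := by
    refine deriv_lin _ ((k10 - q11*(P+R*x2))*(B+D*Real.exp (-a21*x2)) +
      (q11*(A+C*Real.exp (-a21*x2))+q10)*(Q+S*x2)) 0 x1 (fun y => ?_)
    simp only [hp1u1, hp1u2, hu1, hu2]
    try ring
  have hT2 : pd2 (fun a b => ((d12 / a21) * u2 a b + p10) * pd2 u1 a b +
      (c10 - (d12 / a21) * u1 a b) * pd2 u2 a b) x1 x2 =
      0 + ((d12/a21)*(R+S*x1)*(-a21)*(C+D*x1))*Real.exp (-a21*x2) +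
      ((((d12/a21)*(P+Q*x1)+p10)*(-a21)*(C+D*x1) - (d12/a21)*(C+D*x1)*(R+S*x1)
        + ((d12/a21)*(R+S*x1)*(-a21)*(C+D*x1))*x2)*(-a21*Real.exp (-a21*x2))) := by
    refine deriv_shape _ ((c10 - (d12/a21)*(A+B*x1))*(R+S*x1)) 0
      (((d12/a21)*(P+Q*x1)+p10)*(-a21)*(C+D*x1) - (d12/a21)*(C+D*x1)*(R+S*x1))
      ((d12/a21)*(R+S*x1)*(-a21)*(C+D*x1)) a21 x2 (fun y => ?_)
    simp only [hp2u1, hp2u2, hu1, hu2]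
    ring
  show pd1 _ x1 x2 + pd2 _ x1 x2 + e10 * pd1 u1 x1 x2 +
      (d12 * u2 x1 x2 + d10) * pd2 u1 x1 x2 + h10 * pd2 u2 x1 x2 = _
  rw [hT1, hT2, hp1u1, hp2u1, hp2u2, hu2]
  field_simp
  ring

lemma keyG2 (k20 q20 q21 c20 g20 h20 a21 : ℝ)
    (A B C D P Q R S : ℝ) (u1 u2 : ℝ → ℝ → ℝ)
    (hu1 : ∀ a b, u1 a b = A + B*a + (C + D*a)*Real.exp (-a21*b))
    (hu2 : ∀ a b, u2 a b = P + Q*a + (R + S*a)*b) (x1 x2 : ℝ) :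
    Gop2 k20 q20 q21 c20 g20 h20 u1 u2 x1 x2 =
      (g20*Q + h20*R) + (h20*S)*x1 + (g20*S)*x2 := by
  have hp1u1 : ∀ a b, pd1 u1 a b = B + D*Real.exp (-a21*b) := fun a b =>
    deriv_lin _ (A + C*Real.exp (-a21*b)) _ a (fun y => by simp only [hu1]; try ring)
  have hp1u2 : ∀ a b, pd1 u2 a b = Q + S*b := fun a b =>
    deriv_lin _ (P + R*b) _ a (fun y => by simp only [hu2]; try ring)
  have hp2u2 : ∀ a b, pd2 u2 a b = R + S*a := fun a b =>
    deriv_lin _ (P + Q*a) _ b (fun y => by simp only [hu2]; try ring)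
  have hT1 : pd1 (fun a b => (k20 - q21 * u2 a b) * pd1 u1 a b +
      (q21 * u1 a b + q20) * pd1 u2 a b) x1 x2 = 0 := by
    refine deriv_lin _ ((k20 - q21*(P+R*x2))*(B+D*Real.exp (-a21*x2)) +
      (q21*(A+C*Real.exp (-a21*x2))+q20)*(Q+S*x2)) 0 x1 (fun y => ?_)
    simp only [hp1u1, hp1u2, hu1, hu2]
    try ring
  have hT2 : pd2 (pd2 u2) x1 x2 = 0 := by
    refine deriv_lin _ (R + S*x1) 0 x2 (fun y => ?_)
    rw [hp2u2]; ring
  show pd1 _ x1 x2 + c20 * pd2 (pd2 u2) x1 x2 + g20 * pd1 u2 x1 x2 +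
      h20 * pd2 u2 x1 x2 = _
  rw [hT1, hT2, hp1u2, hp2u2]
  ring

lemma mem_span4 {M : Type*} [AddCommGroup M] [Module ℝ M] {f0 f1 f2 f3 v : M}
    (h : v ∈ Submodule.span ℝ ({f0, f1, f2, f3} : Set M)) :
    ∃ c0 c1 c2 c3 : ℝ, v = c0 • f0 + (c1 • f1 + (c2 • f2 + c3 • f3)) := by
  rw [Submodule.mem_span_insert] at h
  obtain ⟨c0, z0, hz0, rfl⟩ := h
  rw [Submodule.mem_span_insert] at hz0
  obtain ⟨c1, z1, hz1, rfl⟩ := hz0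
  rw [Submodule.mem_span_insert] at hz1
  obtain ⟨c2, z2, hz2, rfl⟩ := hz1
  rw [Submodule.mem_span_singleton] at hz2
  obtain ⟨c3, rfl⟩ := hz2
  exact ⟨c0, c1, c2, c3, rfl⟩

lemma comb_mem_span4 {M : Type*} [AddCommGroup M] [Module ℝ M] (f0 f1 f2 f3 : M)
    (c0 c1 c2 c3 : ℝ) :
    c0 • f0 + (c1 • f1 + (c2 • f2 + c3 • f3)) ∈
      Submodule.span ℝ ({f0, f1, f2, f3} : Set M) := by
  refine Submodule.add_mem _
    (Submodule.smul_mem _ _ (Submodule.subset_span (Set.mem_insert _ _)))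
    (Submodule.add_mem _
      (Submodule.smul_mem _ _ (Submodule.subset_span
        (Set.mem_insert_of_mem _ (Set.mem_insert _ _))))
      (Submodule.add_mem _
        (Submodule.smul_mem _ _ (Submodule.subset_span
          (Set.mem_insert_of_mem _ (Set.mem_insert_of_mem _ (Set.mem_insert _ _)))))
        (Submodule.smul_mem _ _ (Submodule.subset_span
          (Set.mem_insert_of_mem _ (Set.mem_insert_of_mem _
            (Set.mem_insert_of_mem _ rfl)))))))
/-- `(G₁, G₂)` acts on the polynomial–exponential product space as stated; in particular
`Span{1, x₁, e^{−a₂₁x₂}, x₁e^{−a₂₁x₂}} × Span{1, x₁, x₂, x₁x₂}` is invariant. -/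
theorem stmt_10 (k10 q10 q11 p10 c10 d12 d10 e10 h10 a21 : ℝ)
    (k20 q20 q21 c20 g20 h20 : ℝ) (ha21 : a21 ≠ 0)
    (δ : Fin 2 → Fin 4 → ℝ) (γ0 : ℝ) (hγ0 : γ0 = p10 * a21 ^ 2 - d10 * a21)
    (u1 u2 : ℝ → ℝ → ℝ)
    (hu1 : ∀ x1 x2, u1 x1 x2 = δ 0 0 + δ 0 1 * x1 +
      (δ 0 2 + δ 0 3 * x1) * Real.exp (-a21 * x2))
    (hu2 : ∀ x1 x2, u2 x1 x2 = δ 1 0 + δ 1 1 * x1 + (δ 1 2 + δ 1 3 * x1) * x2) :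
    (∀ x1 x2 : ℝ,
      Gop1 k10 q10 q11 p10 c10 d12 d10 e10 h10 a21 u1 u2 x1 x2 =
        (e10 * δ 0 1 + h10 * δ 1 2) + (h10 * δ 1 3) * x1 +
        ((γ0 * δ 0 2 + e10 * δ 0 3) + (γ0 * δ 0 3) * x1) * Real.exp (-a21 * x2)) ∧
    (∀ x1 x2 : ℝ,
      Gop2 k20 q20 q21 c20 g20 h20 u1 u2 x1 x2 =
        (g20 * δ 1 1 + h20 * δ 1 2) + (h20 * δ 1 3) * x1 + (g20 * δ 1 3) * x2) ∧
    (∀ v1 v2 : ℝ → ℝ → ℝ,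
      v1 ∈ Submodule.span ℝ
        ({fun _ _ => (1 : ℝ), fun a _ => a, fun _ b => Real.exp (-a21 * b),
          fun a b => a * Real.exp (-a21 * b)} : Set (ℝ → ℝ → ℝ)) →
      v2 ∈ Submodule.span ℝ
        ({fun _ _ => (1 : ℝ), fun a _ => a, fun _ b => b, fun a b => a * b} :
          Set (ℝ → ℝ → ℝ)) →
      Gop1 k10 q10 q11 p10 c10 d12 d10 e10 h10 a21 v1 v2 ∈ Submodule.span ℝ
        ({fun _ _ => (1 : ℝ), fun a _ => a, fun _ b => Real.exp (-a21 * b),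
          fun a b => a * Real.exp (-a21 * b)} : Set (ℝ → ℝ → ℝ)) ∧
      Gop2 k20 q20 q21 c20 g20 h20 v1 v2 ∈ Submodule.span ℝ
        ({fun _ _ => (1 : ℝ), fun a _ => a, fun _ b => b, fun a b => a * b} :
          Set (ℝ → ℝ → ℝ))) := by
  refine ⟨?_, ?_, ?_⟩
  · intro x1 x2
    subst hγ0
    exact keyG1 k10 q10 q11 p10 c10 d12 d10 e10 h10 a21 ha21 _ _ _ _ _ _ _ _ u1 u2 hu1 hu2 x1 x2
  · intro x1 x2
    exact keyG2 k20 q20 q21 c20 g20 h20 a21 _ _ _ _ _ _ _ _ u1 u2 hu1 hu2 x1 x2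
  · intro v1 v2 hv1 hv2
    obtain ⟨c0, c1, c2, c3, hc⟩ := mem_span4 hv1
    obtain ⟨d0, d1, d2, d3, hd⟩ := mem_span4 hv2
    have hv1' : ∀ a b, v1 a b = c0 + c1*a + (c2 + c3*a)*Real.exp (-a21*b) := by
      intro a b; rw [hc]; simp only [Pi.add_apply, Pi.smul_apply, smul_eq_mul]; ring
    have hv2' : ∀ a b, v2 a b = d0 + d1*a + (d2 + d3*a)*b := by
      intro a b; rw [hd]; simp only [Pi.add_apply, Pi.smul_apply, smul_eq_mul]; ring
    constructor
    · have heq : Gop1 k10 q10 q11 p10 c10 d12 d10 e10 h10 a21 v1 v2 =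
          ((e10*c1 + h10*d2) • ((fun _ _ => (1:ℝ)) : ℝ → ℝ → ℝ) + ((h10*d3) • ((fun a _ => a) : ℝ → ℝ → ℝ) +
            (((p10*a21^2 - d10*a21)*c2 + e10*c3) • ((fun _ b => Real.exp (-a21*b)) : ℝ → ℝ → ℝ) +
              ((p10*a21^2 - d10*a21)*c3) • ((fun a b => a * Real.exp (-a21*b)) : ℝ → ℝ → ℝ)))
            : ℝ → ℝ → ℝ) := by
        funext a b
        rw [keyG1 k10 q10 q11 p10 c10 d12 d10 e10 h10 a21 ha21 c0 c1 c2 c3 d0 d1 d2 d3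
          v1 v2 hv1' hv2' a b]
        simp only [Pi.add_apply, Pi.smul_apply, smul_eq_mul]
        ring
      rw [heq]
      exact comb_mem_span4 _ _ _ _ _ _ _ _
    · have heq : Gop2 k20 q20 q21 c20 g20 h20 v1 v2 =
          ((g20*d1 + h20*d2) • ((fun _ _ => (1:ℝ)) : ℝ → ℝ → ℝ) + ((h20*d3) • ((fun a _ => a) : ℝ → ℝ → ℝ) +
            ((g20*d3) • ((fun _ b => b) : ℝ → ℝ → ℝ) + (0:ℝ) • ((fun a b => a * b) : ℝ → ℝ → ℝ))) : ℝ → ℝ → ℝ) := by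
        funext a b
        rw [keyG2 k20 q20 q21 c20 g20 h20 a21 c0 c1 c2 c3 d0 d1 d2 d3 v1 v2 hv1' hv2' a b]
        simp only [Pi.add_apply, Pi.smul_apply, smul_eq_mul]
        ring
      rw [heq]
      exact comb_mem_span4 _ _ _ _ _ _ _ _
end

section
/- Let G_1, G_2 be the operators of the polynomial–exponential system defined in the context, with a_{21} ≠ 0, and let A_{s,i} ∈ ℝ (s = 1,2; i = 1,2,3,4). Set γ_0 = p_{10}a_{21}² − d_{10}a_{21}, l_1 = η_{10}A_{1,2} + h_{10}A_{2,3}, ρ_{1,1} = h_{10}η_{10}A_{2,4}, ρ_{1,2} = h_{10}g_{20}A_{2,4}, ρ_{2,1} = h_{20}A_{2,3} + g_{20}A_{2,2}, ρ_{2,2} = 2h_{20}g_{20}A_{2,4}. Then the functions u_1(x_1,x_2,t) = A_{1,1} + l_1 t + (ρ_{1,1}+ρ_{1,2})t²/2 + (A_{1,2} + h_{10}A_{2,4}t)x_1 + [(A_{1,3} + η_{10}A_{1,4}t)e^{γ_0 t} + (A_{1,4}e^{γ_0 t})x_1]e^{−a_{21}x_2} and u_2(x_1,x_2,t) = A_{2,1}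 + ρ_{2,1}t + ρ_{2,2}t²/2 + (A_{2,2} + h_{20}A_{2,4}t)x_1 + (A_{2,3} + g_{20}A_{2,4}t + A_{2,4}x_1)x_2 satisfy, for all (x_1,x_2,t) ∈ ℝ³ and s = 1,2, ∂u_s/∂t(x_1,x_2,t) = G_s(u_1(·,·,t), u_2(·,·,t))(x_1,x_2). -/
open Real

section

variable {u v : ℝ → ℝ → ℝ}

lemma pd1_eq_of_affine {f g : ℝ → ℝ} (hu : ∀ x y, u x y = f y + g y * x) (x y : ℝ) :
    pd1 u x y = g y := by
  simp only [pd1, hu]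
  exact (((hasDerivAt_id' x).const_mul (g y)).const_add (f y)).deriv.trans (mul_one _)

lemma pd2_eq_of_affine {f g : ℝ → ℝ} (hu : ∀ x y, u x y = f x + g x * y) (x y : ℝ) :
    pd2 u x y = g x := by
  simp only [pd2, hu]
  exact (((hasDerivAt_id' y).const_mul (g x)).const_add (f x)).deriv.trans (mul_one _)

lemma pd2_eq_of_exp {a : ℝ} {f g : ℝ → ℝ} (hu : ∀ x y, u x y = f x + g x * exp (-a * y))
    (x y : ℝ) : pd2 u x y = -a * g x * exp (-a * y) := by
  simp only [pd2, hu]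
  have := (((hasDerivAt_id' y).const_mul (-a)).exp.const_mul (g x)).const_add (f x)
  exact this.deriv.trans (by ring)

lemma pd1_flux_eq_zero (k q q0 : ℝ) {f g f' g' : ℝ → ℝ} (hu : ∀ x y, u x y = f y + g y * x)
    (hv : ∀ x y, v x y = f' y + g' y * x) (x y : ℝ) :
    pd1 (fun a b => (k - q * v a b) * pd1 u a b + (q * u a b + q0) * pd1 v a b) x y = 0 := by
  have hconst : (fun a => (k - q * v a y) * pd1 u a y + (q * u a y + q0) * pd1 v a y) =
      fun _ => (k - q * f' y) * g y + (q * f y + q0) * g' y := by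
    funext a
    rw [pd1_eq_of_affine hu, pd1_eq_of_affine hv, hu, hv]
    ring
  exact (congrArg (deriv · x) hconst).trans (deriv_const x _)

lemma pd2_flux_add_drift (d p c d0 : ℝ) {a : ℝ} {P Q R S : ℝ → ℝ}
    (hu : ∀ x y, u x y = P x + Q x * exp (-a * y)) (hv : ∀ x y, v x y = R x + S x * y)
    (x y : ℝ) :
    pd2 (fun a' b => ((d / a) * v a' b + p) * pd2 u a' b + (c - (d / a) * u a' b) * pd2 v a' b) x y
      + (d * v x y + d0) * pd2 u x y = (p * a ^ 2 - d0 * a) * Q x * exp (-a * y) := by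
  simp only [pd2_eq_of_exp hu, pd2_eq_of_affine hv]
  have hE : HasDerivAt (fun b => exp (-a * b)) (-a * exp (-a * y)) y :=
    ((hasDerivAt_id' y).const_mul (-a)).exp.congr_deriv (by ring)
  have hv' := (((hasDerivAt_id' y).const_mul (S x)).const_add (R x)).const_mul (d / a)
  have hu' := ((hE.const_mul (Q x)).const_add (P x)).const_mul (d / a)
  have hflux := ((hv'.add_const p).mul (hE.const_mul (-a * Q x))).add
    ((hu'.const_sub c).mul_const (S x))
  simp only [Pi.add_def, Pi.mul_def] at hflux
  -- also for `a = 0`, where `d / a = 0` but both sides vanish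
  have hda : d / a * a ^ 2 = d * a := by
    rcases eq_or_ne a 0 with rfl | ha
    · simp
    · field_simp
  simp only [pd2, hu, hv]
  rw [hflux.deriv]
  linear_combination (Q x * exp (-a * y) * (R x + S x * y)) * hda

theorem Gop1_eq_of_affine_exp (k10 q10 q11 p10 c10 d12 d10 e10 h10 a21 : ℝ)
    {P0 P1 Q0 Q1 R0 R1 S0 S1 : ℝ}
    (hu : ∀ x y, u x y = P0 + P1 * x + (Q0 + Q1 * x) * exp (-a21 * y))
    (hv : ∀ x y, v x y = R0 + R1 * x + (S0 + S1 * x) * y) (x y : ℝ) :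
    Gop1 k10 q10 q11 p10 c10 d12 d10 e10 h10 a21 u v x y =
      (p10 * a21 ^ 2 - d10 * a21) * (Q0 + Q1 * x) * exp (-a21 * y) +
        e10 * (P1 + Q1 * exp (-a21 * y)) + h10 * (S0 + S1 * x) := by
  have hux : ∀ x y, u x y = (P0 + Q0 * exp (-a21 * y)) + (P1 + Q1 * exp (-a21 * y)) * x :=
    fun x y => by rw [hu]; ring
  have hvx : ∀ x y, v x y = (R0 + S0 * y) + (R1 + S1 * y) * x := fun x y => by rw [hv]; ring
  have hdrift := pd2_flux_add_drift d12 p10 c10 d10 (P := fun x => P0 + P1 * x)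
    (Q := fun x => Q0 + Q1 * x) (R := fun x => R0 + R1 * x) hu hv x y
  simp only [Gop1]
  rw [pd1_flux_eq_zero k10 q11 q10 hux hvx, pd1_eq_of_affine hux, pd2_eq_of_affine hv]
  linear_combination hdrift

theorem Gop2_eq_of_affine (k20 q20 q21 c20 g20 h20 : ℝ) {f g : ℝ → ℝ} {R0 R1 S0 S1 : ℝ}
    (hu : ∀ x y, u x y = f y + g y * x)
    (hv : ∀ x y, v x y = R0 + R1 * x + (S0 + S1 * x) * y) (x y : ℝ) :
    Gop2 k20 q20 q21 c20 g20 h20 u v x y = g20 * (R1 + S1 * y) + h20 * (S0 + S1 * x) := by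
  have hvx : ∀ x y, v x y = (R0 + S0 * y) + (R1 + S1 * y) * x := fun x y => by rw [hv]; ring
  have hv' : ∀ x y, pd2 v x y = (S0 + S1 * x) + 0 * y := fun x y => by
    rw [pd2_eq_of_affine hv]; ring
  simp only [Gop2]
  rw [pd1_flux_eq_zero k20 q21 q20 hu hvx, pd2_eq_of_affine hv', pd1_eq_of_affine hvx,
    pd2_eq_of_affine hv]
  ring

end

lemma hasDerivAt_quadratic_add_affine_mul_exp (c0 c1 c2 a b γ t : ℝ) :
    HasDerivAt (fun τ => c0 + c1 * τ + c2 * τ ^ 2 / 2 + (a + b * τ) * exp (γ * τ))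
      (c1 + c2 * t + (b + γ * (a + b * t)) * exp (γ * t)) t := by
  have hlin := (hasDerivAt_id' t).const_mul b |>.const_add a
  have hexp := ((hasDerivAt_id' t).const_mul γ).exp
  exact ((((hasDerivAt_id' t).const_mul c1).const_add c0).add
    (((hasDerivAt_pow 2 t).const_mul c2).div_const 2)).add (hlin.mul hexp) |>.congr_deriv
    (by norm_num; ring)

theorem stmt_11_general (k10 q10 q11 p10 c10 d12 d10 e10 h10 a21 : ℝ)
    (k20 q20 q21 c20 g20 h20 : ℝ)
    (A : Fin 2 → Fin 4 → ℝ)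
    (γ0 l1 ρ11 ρ12 ρ21 ρ22 : ℝ)
    (hγ0 : γ0 = p10 * a21 ^ 2 - d10 * a21)
    (hl1 : l1 = e10 * A 0 1 + h10 * A 1 2)
    (hρ11 : ρ11 = h10 * e10 * A 1 3)
    (hρ12 : ρ12 = h10 * g20 * A 1 3)
    (hρ21 : ρ21 = h20 * A 1 2 + g20 * A 1 1)
    (hρ22 : ρ22 = 2 * h20 * g20 * A 1 3)
    (u1 u2 : ℝ → ℝ → ℝ → ℝ)
    (hu1 : ∀ x1 x2 t, u1 x1 x2 t =
      A 0 0 + l1 * t + (ρ11 + ρ12) * t ^ 2 / 2 + (A 0 1 + h10 * A 1 3 * t) * x1 +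
      ((A 0 2 + e10 * A 0 3 * t) * Real.exp (γ0 * t) +
        (A 0 3 * Real.exp (γ0 * t)) * x1) * Real.exp (-a21 * x2))
    (hu2 : ∀ x1 x2 t, u2 x1 x2 t =
      A 1 0 + ρ21 * t + ρ22 * t ^ 2 / 2 + (A 1 1 + h20 * A 1 3 * t) * x1 +
      (A 1 2 + g20 * A 1 3 * t + A 1 3 * x1) * x2) :
    ∀ (x1 x2 t : ℝ),
      deriv (fun τ => u1 x1 x2 τ) t =
        Gop1 k10 q10 q11 p10 c10 d12 d10 e10 h10 a21
          (fun a b => u1 a b t) (fun a b => u2 a b t) x1 x2 ∧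
      deriv (fun τ => u2 x1 x2 τ) t =
        Gop2 k20 q20 q21 c20 g20 h20
          (fun a b => u1 a b t) (fun a b => u2 a b t) x1 x2 := by
  intro x1 x2 t
  have hu1t : HasDerivAt (fun τ => u1 x1 x2 τ) _ t :=
    (hasDerivAt_quadratic_add_affine_mul_exp (A 0 0 + A 0 1 * x1) (l1 + h10 * A 1 3 * x1)
      (ρ11 + ρ12) ((A 0 2 + A 0 3 * x1) * exp (-a21 * x2)) (e10 * A 0 3 * exp (-a21 * x2)) γ0
      t).congr_of_eventuallyEq (.of_forall fun τ => by simp only [hu1]; ring)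
  have hu2t : HasDerivAt (fun τ => u2 x1 x2 τ) _ t :=
    (hasDerivAt_quadratic_add_affine_mul_exp (A 1 0 + A 1 1 * x1 + (A 1 2 + A 1 3 * x1) * x2)
      (ρ21 + h20 * A 1 3 * x1 + g20 * A 1 3 * x2) ρ22 0 0 0 t).congr_of_eventuallyEq
      (.of_forall fun τ => by simp only [hu2]; ring)
  have hu1x : ∀ x y, u1 x y t = (A 0 0 + l1 * t + (ρ11 + ρ12) * t ^ 2 / 2 +
      (A 0 2 + e10 * A 0 3 * t) * exp (γ0 * t) * exp (-a21 * y)) +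
      (A 0 1 + h10 * A 1 3 * t + A 0 3 * exp (γ0 * t) * exp (-a21 * y)) * x :=
    fun x y => by rw [hu1]; ring
  rw [hu1t.deriv, hu2t.deriv, Gop1_eq_of_affine_exp _ _ _ _ _ _ _ _ _ _ (fun x y => hu1 x y t)
    (fun x y => hu2 x y t), Gop2_eq_of_affine _ _ _ _ _ _ hu1x (fun x y => hu2 x y t), ← hγ0]
  subst hl1 hρ11 hρ12 hρ21 hρ22
  constructor <;> ring

/-- The analytical solution of Example 3.2 for the integer orders α₁ = α₂ = 1. -/
theorem stmt_11 (k10 q10 q11 p10 c10 d12 d10 e10 h10 a21 : ℝ)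
    (k20 q20 q21 c20 g20 h20 : ℝ) (ha21 : a21 ≠ 0)
    (A : Fin 2 → Fin 4 → ℝ)
    (γ0 l1 ρ11 ρ12 ρ21 ρ22 : ℝ)
    (hγ0 : γ0 = p10 * a21 ^ 2 - d10 * a21)
    (hl1 : l1 = e10 * A 0 1 + h10 * A 1 2)
    (hρ11 : ρ11 = h10 * e10 * A 1 3)
    (hρ12 : ρ12 = h10 * g20 * A 1 3)
    (hρ21 : ρ21 = h20 * A 1 2 + g20 * A 1 1)
    (hρ22 : ρ22 = 2 * h20 * g20 * A 1 3)
    (u1 u2 : ℝ → ℝ → ℝ → ℝ)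
    (hu1 : ∀ x1 x2 t, u1 x1 x2 t =
      A 0 0 + l1 * t + (ρ11 + ρ12) * t ^ 2 / 2 + (A 0 1 + h10 * A 1 3 * t) * x1 +
      ((A 0 2 + e10 * A 0 3 * t) * Real.exp (γ0 * t) +
        (A 0 3 * Real.exp (γ0 * t)) * x1) * Real.exp (-a21 * x2))
    (hu2 : ∀ x1 x2 t, u2 x1 x2 t =
      A 1 0 + ρ21 * t + ρ22 * t ^ 2 / 2 + (A 1 1 + h20 * A 1 3 * t) * x1 +
      (A 1 2 + g20 * A 1 3 * t + A 1 3 * x1) * x2) :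
    ∀ (x1 x2 t : ℝ),
      deriv (fun τ => u1 x1 x2 τ) t =
        Gop1 k10 q10 q11 p10 c10 d12 d10 e10 h10 a21
          (fun a b => u1 a b t) (fun a b => u2 a b t) x1 x2 ∧
      deriv (fun τ => u2 x1 x2 τ) t =
        Gop2 k20 q20 q21 c20 g20 h20
          (fun a b => u1 a b t) (fun a b => u2 a b t) x1 x2 :=
  stmt_11_general k10 q10 q11 p10 c10 d12 d10 e10 h10 a21 k20 q20 q21 c20 g20 h20 A γ0 l1 ρ11 ρ12
    ρ21 ρ22 hγ0 hl1 hρ11 hρ12 hρ21 hρ22 u1 u2 hu1 hu2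
end

section
/- Let H_1, H_2 be the trigonometric–exponential system operators defined in the context, with a_{10} > 0 and b_{11} ≠ 0. For any real constants δ_{s,i} (s = 1,2; i = 1,2,3,4), let u_1(x_1,x_2) = (δ_{1,1} + δ_{1,2}x_2)sin(√a_{10} x_1) + (δ_{1,3} + δ_{1,4}x_2)cos(√a_{10} x_1) and u_2(x_1,x_2) = δ_{2,1} + δ_{2,2}x_2 + (δ_{2,3} + δ_{2,4}x_2)e^{−b_{11}x_1}. Then, with γ_0 = q_{20}b_{11}² − g_{20}b_{11}, for all (x_1,x_2) ∈ ℝ²: H_1(u_1,u_2)(x_1,x_2) = [−k_{10}a_{10}δ_{1,1} + d_{10}δ_{1,2} − η_{10}√a_{10}δ_{1,3} + (−k_{10}a_{10}δ_{1,2} − η_{10}√a_{10}δ_{1,4})x_2]sin(√a_{10}x_1) + [−k_{10}a_{10}δ_{1,3} + d_{10}δ_{1,4} + η_{10}√a_{10}δ_{1,1} + (−k_{10}a_{10}δ_{1,4} + η_{10}√a_{10}δ_{1,2})x_2]cos(√a_{10}x_1), and H_2(u_1,u_2)(x_1,x_2) = h_{20}δ_{2,2} + [γ_0δ_{2,3}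 + h_{20}δ_{2,4} + (γ_0δ_{2,4})x_2]e^{−b_{11}x_1}. In particular Span{sin(√a_{10}x_1), x_2 sin(√a_{10}x_1), cos(√a_{10}x_1), x_2 cos(√a_{10}x_1)} × Span{1, x_2, e^{−b_{11}x_1}, x_2 e^{−b_{11}x_1}} is invariant under (H_1, H_2). -/
/-- The first operator `H₁` of the trigonometric–exponential system (Example 3.4). -/
noncomputable def Hop1 (k10 g10 p10 c10 c11 e10 d10 b11 : ℝ) (u1 u2 : ℝ → ℝ → ℝ) : ℝ → ℝ → ℝ :=
  fun x1 x2 =>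
    k10 * pd1 (pd1 u1) x1 x2 + (g10 / b11) * pd1 (pd1 u2) x1 x2 +
    pd2 (fun a b => (p10 - c11 * u2 a b) * pd2 u1 a b + (c11 * u1 a b + c10) * pd2 u2 a b) x1 x2 +
    e10 * pd1 u1 x1 x2 + g10 * pd1 u2 x1 x2 + d10 * pd2 u1 x1 x2

/-- The second operator `H₂` of the trigonometric–exponential system (Example 3.4). -/
noncomputable def Hop2 (q20 p20 c20 c21 g20 h20 : ℝ) (u1 u2 : ℝ → ℝ → ℝ) : ℝ → ℝ → ℝ :=
  fun x1 x2 =>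
    q20 * pd1 (pd1 u2) x1 x2 +
    pd2 (fun a b => (p20 - c21 * u2 a b) * pd2 u1 a b + (c21 * u1 a b + c20) * pd2 u2 a b) x1 x2 +
    g20 * pd1 u2 x1 x2 + h20 * pd2 u2 x1 x2

lemma hd_aff (C D x : ℝ) : HasDerivAt (fun y : ℝ => C + D * y) D x := by
  simpa using (hasDerivAt_const x C).fun_add ((hasDerivAt_id x).const_mul D)

lemma hd_trig (A B s x : ℝ) :
    HasDerivAt (fun y : ℝ => A * Real.sin (s * y) + B * Real.cos (s * y))
      (A * s * Real.cos (s * x) + (-(B * s)) * Real.sin (s * x)) x := by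
  have h : HasDerivAt (fun y : ℝ => s * y) s x := by
    simpa using (hasDerivAt_id x).const_mul s
  have h1 := h.sin.const_mul A
  have h2 := h.cos.const_mul B
  exact (h1.fun_add h2).congr_deriv (by ring)

lemma hd_exp (C D b x : ℝ) :
    HasDerivAt (fun y : ℝ => C + D * Real.exp (b * y)) (D * b * Real.exp (b * x)) x := by
  have h : HasDerivAt (fun y : ℝ => b * y) b x := by
    simpa using (hasDerivAt_id x).const_mul b
  have h1 := h.exp.const_mul D
  exact ((hasDerivAt_const x C).fun_add h1).congr_deriv (by ring)

lemma nonlinear_zero (p c0 c C1 D1 C2 D2 x1 x2 : ℝ) (u1 u2 : ℝ → ℝ → ℝ)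
    (h1 : ∀ y, u1 x1 y = C1 + D1 * y) (h2 : ∀ y, u2 x1 y = C2 + D2 * y) :
    pd2 (fun a b => (p - c * u2 a b) * pd2 u1 a b + (c * u1 a b + c0) * pd2 u2 a b) x1 x2 = 0 := by
  have hp1 : ∀ y, pd2 u1 x1 y = D1 := fun y => by
    show deriv (fun z => u1 x1 z) y = _
    rw [funext h1, (hd_aff C1 D1 y).deriv]
  have hp2 : ∀ y, pd2 u2 x1 y = D2 := fun y => by
    show deriv (fun z => u2 x1 z) y = _
    rw [funext h2, (hd_aff C2 D2 y).deriv]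
  show deriv (fun y => (p - c * u2 x1 y) * pd2 u1 x1 y + (c * u1 x1 y + c0) * pd2 u2 x1 y) x2 = 0
  have hf : (fun y => (p - c * u2 x1 y) * pd2 u1 x1 y + (c * u1 x1 y + c0) * pd2 u2 x1 y)
      = fun _ : ℝ => (p - c * C2) * D1 + (c * C1 + c0) * D2 := funext fun y => by
    rw [h1, h2, hp1, hp2]; ring
  rw [hf, deriv_const]

lemma key (k10 g10 p10 c10 c11 e10 d10 q20 p20 c20 c21 g20 h20 a10 b11 : ℝ)
    (ha10 : 0 ≤ a10) (hb11 : b11 ≠ 0)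
    (A B C D E F G H : ℝ) (u1 u2 : ℝ → ℝ → ℝ)
    (hu1 : ∀ x1 x2, u1 x1 x2 = (A + B * x2) * Real.sin (Real.sqrt a10 * x1) +
      (C + D * x2) * Real.cos (Real.sqrt a10 * x1))
    (hu2 : ∀ x1 x2, u2 x1 x2 = E + F * x2 + (G + H * x2) * Real.exp (-b11 * x1)) :
    (∀ x1 x2, Hop1 k10 g10 p10 c10 c11 e10 d10 b11 u1 u2 x1 x2 =
      (-(k10 * a10) * A + d10 * B - e10 * Real.sqrt a10 * C +
        (-(k10 * a10) * B - e10 * Real.sqrt a10 * D) * x2) * Real.sin (Real.sqrt a10 * x1) +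
      (-(k10 * a10) * C + d10 * D + e10 * Real.sqrt a10 * A +
        (-(k10 * a10) * D + e10 * Real.sqrt a10 * B) * x2) * Real.cos (Real.sqrt a10 * x1)) ∧
    (∀ x1 x2, Hop2 q20 p20 c20 c21 g20 h20 u1 u2 x1 x2 =
      h20 * F + ((q20 * b11 ^ 2 - g20 * b11) * G + h20 * H +
        ((q20 * b11 ^ 2 - g20 * b11) * H) * x2) * Real.exp (-b11 * x1)) := by
  have hss : Real.sqrt a10 * Real.sqrt a10 = a10 := Real.mul_self_sqrt ha10
  have P1 : ∀ x1 x2 : ℝ, pd1 u1 x1 x2 =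
      (-((C + D * x2) * Real.sqrt a10)) * Real.sin (Real.sqrt a10 * x1) +
      ((A + B * x2) * Real.sqrt a10) * Real.cos (Real.sqrt a10 * x1) := by
    intro x1 x2
    show deriv (fun y => u1 y x2) x1 = _
    have hf : (fun y => u1 y x2) = fun y => (A + B * x2) * Real.sin (Real.sqrt a10 * y) +
        (C + D * x2) * Real.cos (Real.sqrt a10 * y) := funext fun y => hu1 y x2
    rw [hf, (hd_trig _ _ _ _).deriv]; ring
  have P11 : ∀ x1 x2 : ℝ, pd1 (pd1 u1) x1 x2 =
      -a10 * ((A + B * x2) * Real.sin (Real.sqrt a10 * x1) +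
        (C + D * x2) * Real.cos (Real.sqrt a10 * x1)) := by
    intro x1 x2
    show deriv (fun y => pd1 u1 y x2) x1 = _
    have hf : (fun y => pd1 u1 y x2) = fun y =>
        (-((C + D * x2) * Real.sqrt a10)) * Real.sin (Real.sqrt a10 * y) +
        ((A + B * x2) * Real.sqrt a10) * Real.cos (Real.sqrt a10 * y) := funext fun y => P1 y x2
    rw [hf, (hd_trig _ _ _ _).deriv]
    linear_combination (-((C + D * x2) * Real.cos (Real.sqrt a10 * x1))
      - (A + B * x2) * Real.sin (Real.sqrt a10 * x1)) * hss
  have P2 : ∀ x1 x2 : ℝ, pd2 u1 x1 x2 =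
      B * Real.sin (Real.sqrt a10 * x1) + D * Real.cos (Real.sqrt a10 * x1) := by
    intro x1 x2
    show deriv (fun y => u1 x1 y) x2 = _
    have hf : (fun y => u1 x1 y) = fun y =>
        (A * Real.sin (Real.sqrt a10 * x1) + C * Real.cos (Real.sqrt a10 * x1)) +
        (B * Real.sin (Real.sqrt a10 * x1) + D * Real.cos (Real.sqrt a10 * x1)) * y :=
      funext fun y => by rw [hu1]; ring
    rw [hf, (hd_aff _ _ _).deriv]
  have Q1 : ∀ x1 x2 : ℝ, pd1 u2 x1 x2 =
      (G + H * x2) * (-b11) * Real.exp (-b11 * x1) := by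
    intro x1 x2
    show deriv (fun y => u2 y x2) x1 = _
    have hf : (fun y => u2 y x2) = fun y =>
        (E + F * x2) + (G + H * x2) * Real.exp (-b11 * y) := funext fun y => by rw [hu2]
    rw [hf, (hd_exp _ _ _ _).deriv]
  have Q11 : ∀ x1 x2 : ℝ, pd1 (pd1 u2) x1 x2 =
      (G + H * x2) * (b11 * b11) * Real.exp (-b11 * x1) := by
    intro x1 x2
    show deriv (fun y => pd1 u2 y x2) x1 = _
    have hf : (fun y => pd1 u2 y x2) = fun y =>
        0 + ((G + H * x2) * (-b11)) * Real.exp (-b11 * y) := funext fun y => by rw [Q1]; ring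
    rw [hf, (hd_exp _ _ _ _).deriv]; ring
  have Q2 : ∀ x1 x2 : ℝ, pd2 u2 x1 x2 = F + H * Real.exp (-b11 * x1) := by
    intro x1 x2
    show deriv (fun y => u2 x1 y) x2 = _
    have hf : (fun y => u2 x1 y) = fun y =>
        (E + G * Real.exp (-b11 * x1)) + (F + H * Real.exp (-b11 * x1)) * y :=
      funext fun y => by rw [hu2]; ring
    rw [hf, (hd_aff _ _ _).deriv]
  constructor
  · intro x1 x2
    show k10 * pd1 (pd1 u1) x1 x2 + (g10 / b11) * pd1 (pd1 u2) x1 x2 +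
      pd2 (fun a b => (p10 - c11 * u2 a b) * pd2 u1 a b + (c11 * u1 a b + c10) * pd2 u2 a b) x1 x2 +
      e10 * pd1 u1 x1 x2 + g10 * pd1 u2 x1 x2 + d10 * pd2 u1 x1 x2 = _
    rw [P11, Q11, P1, Q1, P2,
      nonlinear_zero p10 c10 c11
        (A * Real.sin (Real.sqrt a10 * x1) + C * Real.cos (Real.sqrt a10 * x1))
        (B * Real.sin (Real.sqrt a10 * x1) + D * Real.cos (Real.sqrt a10 * x1))
        (E + G * Real.exp (-b11 * x1)) (F + H * Real.exp (-b11 * x1)) x1 x2 u1 u2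
        (fun y => by rw [hu1]; ring) (fun y => by rw [hu2]; ring)]
    field_simp
    ring
  · intro x1 x2
    show q20 * pd1 (pd1 u2) x1 x2 +
      pd2 (fun a b => (p20 - c21 * u2 a b) * pd2 u1 a b + (c21 * u1 a b + c20) * pd2 u2 a b) x1 x2 +
      g20 * pd1 u2 x1 x2 + h20 * pd2 u2 x1 x2 = _
    rw [Q11, Q1, Q2,
      nonlinear_zero p20 c20 c21
        (A * Real.sin (Real.sqrt a10 * x1) + C * Real.cos (Real.sqrt a10 * x1))
        (B * Real.sin (Real.sqrt a10 * x1) + D * Real.cos (Real.sqrt a10 * x1))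
        (E + G * Real.exp (-b11 * x1)) (F + H * Real.exp (-b11 * x1)) x1 x2 u1 u2
        (fun y => by rw [hu1]; ring) (fun y => by rw [hu2]; ring)]
    ring

/-- `(H₁, H₂)` acts on the trigonometric–exponential product space as stated; in particular
that product space is invariant under `(H₁, H₂)` (case 11 of Table 2). -/
theorem stmt_12 (k10 g10 p10 c10 c11 e10 d10 : ℝ) (q20 p20 c20 c21 g20 h20 : ℝ)
    (a10 b11 : ℝ) (ha10 : 0 < a10) (hb11 : b11 ≠ 0)
    (δ : Fin 2 → Fin 4 → ℝ) (γ0 : ℝ) (hγ0 : γ0 = q20 * b11 ^ 2 - g20 * b11)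
    (u1 u2 : ℝ → ℝ → ℝ)
    (hu1 : ∀ x1 x2, u1 x1 x2 =
      (δ 0 0 + δ 0 1 * x2) * Real.sin (Real.sqrt a10 * x1) +
      (δ 0 2 + δ 0 3 * x2) * Real.cos (Real.sqrt a10 * x1))
    (hu2 : ∀ x1 x2, u2 x1 x2 =
      δ 1 0 + δ 1 1 * x2 + (δ 1 2 + δ 1 3 * x2) * Real.exp (-b11 * x1)) :
    (∀ x1 x2 : ℝ,
      Hop1 k10 g10 p10 c10 c11 e10 d10 b11 u1 u2 x1 x2 =
        (-(k10 * a10) * δ 0 0 + d10 * δ 0 1 - e10 * Real.sqrt a10 * δ 0 2 +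
          (-(k10 * a10) * δ 0 1 - e10 * Real.sqrt a10 * δ 0 3) * x2) *
            Real.sin (Real.sqrt a10 * x1) +
        (-(k10 * a10) * δ 0 2 + d10 * δ 0 3 + e10 * Real.sqrt a10 * δ 0 0 +
          (-(k10 * a10) * δ 0 3 + e10 * Real.sqrt a10 * δ 0 1) * x2) *
            Real.cos (Real.sqrt a10 * x1)) ∧
    (∀ x1 x2 : ℝ,
      Hop2 q20 p20 c20 c21 g20 h20 u1 u2 x1 x2 =
        h20 * δ 1 1 +
        (γ0 * δ 1 2 + h20 * δ 1 3 + (γ0 * δ 1 3) * x2) * Real.exp (-b11 * x1)) ∧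
    (∀ v1 v2 : ℝ → ℝ → ℝ,
      v1 ∈ Submodule.span ℝ
        ({fun x1 _ => Real.sin (Real.sqrt a10 * x1),
          fun x1 x2 => x2 * Real.sin (Real.sqrt a10 * x1),
          fun x1 _ => Real.cos (Real.sqrt a10 * x1),
          fun x1 x2 => x2 * Real.cos (Real.sqrt a10 * x1)} : Set (ℝ → ℝ → ℝ)) →
      v2 ∈ Submodule.span ℝ
        ({fun _ _ => (1 : ℝ), fun _ x2 => x2, fun x1 _ => Real.exp (-b11 * x1),
          fun x1 x2 => x2 * Real.exp (-b11 * x1)} : Set (ℝ → ℝ → ℝ)) →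
      Hop1 k10 g10 p10 c10 c11 e10 d10 b11 v1 v2 ∈ Submodule.span ℝ
        ({fun x1 _ => Real.sin (Real.sqrt a10 * x1),
          fun x1 x2 => x2 * Real.sin (Real.sqrt a10 * x1),
          fun x1 _ => Real.cos (Real.sqrt a10 * x1),
          fun x1 x2 => x2 * Real.cos (Real.sqrt a10 * x1)} : Set (ℝ → ℝ → ℝ)) ∧
      Hop2 q20 p20 c20 c21 g20 h20 v1 v2 ∈ Submodule.span ℝ
        ({fun _ _ => (1 : ℝ), fun _ x2 => x2, fun x1 _ => Real.exp (-b11 * x1),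
          fun x1 x2 => x2 * Real.exp (-b11 * x1)} : Set (ℝ → ℝ → ℝ))) := by
  
  obtain ⟨K1, K2⟩ := key k10 g10 p10 c10 c11 e10 d10 q20 p20 c20 c21 g20 h20 a10 b11
    ha10.le hb11 (δ 0 0) (δ 0 1) (δ 0 2) (δ 0 3) (δ 1 0) (δ 1 1) (δ 1 2) (δ 1 3) u1 u2 hu1 hu2
  refine ⟨K1, fun x1 x2 => by rw [K2, hγ0], ?_⟩
  intro v1 v2 hv1 hv2
  obtain ⟨c1, z1, h1, rfl⟩ := Submodule.mem_span_insert.mp hv1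
  obtain ⟨c2, z2, h2, rfl⟩ := Submodule.mem_span_insert.mp h1
  obtain ⟨c3, z3, h3, rfl⟩ := Submodule.mem_span_insert.mp h2
  obtain ⟨c4, rfl⟩ := Submodule.mem_span_singleton.mp h3
  obtain ⟨d1, w1, g1, rfl⟩ := Submodule.mem_span_insert.mp hv2
  obtain ⟨d2, w2, g2, rfl⟩ := Submodule.mem_span_insert.mp g1
  obtain ⟨d3, w3, g3, rfl⟩ := Submodule.mem_span_insert.mp g2
  obtain ⟨d4, rfl⟩ := Submodule.mem_span_singleton.mp g3
  have hA : ∀ x1 x2 : ℝ,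
      ((c1 • ((fun x1 _ => Real.sin (Real.sqrt a10 * x1) : ℝ → ℝ → ℝ)) +
        (c2 • ((fun x1 x2 => x2 * Real.sin (Real.sqrt a10 * x1) : ℝ → ℝ → ℝ)) +
        (c3 • ((fun x1 _ => Real.cos (Real.sqrt a10 * x1) : ℝ → ℝ → ℝ)) +
        c4 • ((fun x1 x2 => x2 * Real.cos (Real.sqrt a10 * x1) : ℝ → ℝ → ℝ))))) : ℝ → ℝ → ℝ) x1 x2 =
      (c1 + c2 * x2) * Real.sin (Real.sqrt a10 * x1) +
      (c3 + c4 * x2) * Real.cos (Real.sqrt a10 * x1) := fun x1 x2 => by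
    simp only [Pi.add_apply, Pi.smul_apply, smul_eq_mul]; ring
  have hB : ∀ x1 x2 : ℝ,
      ((d1 • ((fun _ _ => (1 : ℝ) : ℝ → ℝ → ℝ)) + (d2 • ((fun _ x2 => x2 : ℝ → ℝ → ℝ)) +
        (d3 • ((fun x1 _ => Real.exp (-b11 * x1) : ℝ → ℝ → ℝ)) +
        d4 • ((fun x1 x2 => x2 * Real.exp (-b11 * x1) : ℝ → ℝ → ℝ))))) : ℝ → ℝ → ℝ) x1 x2 =
      d1 + d2 * x2 + (d3 + d4 * x2) * Real.exp (-b11 * x1) := fun x1 x2 => by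
    simp only [Pi.add_apply, Pi.smul_apply, smul_eq_mul]; ring
  obtain ⟨L1, L2⟩ := key k10 g10 p10 c10 c11 e10 d10 q20 p20 c20 c21 g20 h20 a10 b11
    ha10.le hb11 c1 c2 c3 c4 d1 d2 d3 d4 _ _ hA hB
  constructor
  · have hfun : Hop1 k10 g10 p10 c10 c11 e10 d10 b11
        (c1 • ((fun x1 _ => Real.sin (Real.sqrt a10 * x1) : ℝ → ℝ → ℝ)) +
          (c2 • ((fun x1 x2 => x2 * Real.sin (Real.sqrt a10 * x1) : ℝ → ℝ → ℝ)) +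
          (c3 • ((fun x1 _ => Real.cos (Real.sqrt a10 * x1) : ℝ → ℝ → ℝ)) +
          c4 • ((fun x1 x2 => x2 * Real.cos (Real.sqrt a10 * x1) : ℝ → ℝ → ℝ)))))
        (d1 • ((fun _ _ => (1 : ℝ) : ℝ → ℝ → ℝ)) + (d2 • ((fun _ x2 => x2 : ℝ → ℝ → ℝ)) +
          (d3 • ((fun x1 _ => Real.exp (-b11 * x1) : ℝ → ℝ → ℝ)) +
          d4 • ((fun x1 x2 => x2 * Real.exp (-b11 * x1) : ℝ → ℝ → ℝ))))) =
        (-(k10 * a10) * c1 + d10 * c2 - e10 * Real.sqrt a10 * c3) •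
          ((fun x1 _ => Real.sin (Real.sqrt a10 * x1) : ℝ → ℝ → ℝ)) +
        ((-(k10 * a10) * c2 - e10 * Real.sqrt a10 * c4) •
          ((fun x1 x2 => x2 * Real.sin (Real.sqrt a10 * x1) : ℝ → ℝ → ℝ)) +
        ((-(k10 * a10) * c3 + d10 * c4 + e10 * Real.sqrt a10 * c1) •
          ((fun x1 _ => Real.cos (Real.sqrt a10 * x1) : ℝ → ℝ → ℝ)) +
        (-(k10 * a10) * c4 + e10 * Real.sqrt a10 * c2) •
          ((fun x1 x2 => x2 * Real.cos (Real.sqrt a10 * x1) : ℝ → ℝ → ℝ)))) :=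
      funext fun x1 => funext fun x2 => by
        simp only [Pi.add_apply, Pi.smul_apply, smul_eq_mul]
        rw [L1]; ring
    rw [hfun]
    refine Submodule.add_mem _ (Submodule.smul_mem _ _ (Submodule.subset_span (Set.mem_insert _ _)))
      (Submodule.add_mem _ (Submodule.smul_mem _ _ (Submodule.subset_span
        (Set.mem_insert_of_mem _ (Set.mem_insert _ _))))
      (Submodule.add_mem _ (Submodule.smul_mem _ _ (Submodule.subset_span
        (Set.mem_insert_of_mem _ (Set.mem_insert_of_mem _ (Set.mem_insert _ _)))))
      (Submodule.smul_mem _ _ (Submodule.subset_span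
        (Set.mem_insert_of_mem _ (Set.mem_insert_of_mem _ (Set.mem_insert_of_mem _ rfl)))))))
  · have hfun : Hop2 q20 p20 c20 c21 g20 h20
        (c1 • ((fun x1 _ => Real.sin (Real.sqrt a10 * x1) : ℝ → ℝ → ℝ)) +
          (c2 • ((fun x1 x2 => x2 * Real.sin (Real.sqrt a10 * x1) : ℝ → ℝ → ℝ)) +
          (c3 • ((fun x1 _ => Real.cos (Real.sqrt a10 * x1) : ℝ → ℝ → ℝ)) +
          c4 • ((fun x1 x2 => x2 * Real.cos (Real.sqrt a10 * x1) : ℝ → ℝ → ℝ)))))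
        (d1 • ((fun _ _ => (1 : ℝ) : ℝ → ℝ → ℝ)) + (d2 • ((fun _ x2 => x2 : ℝ → ℝ → ℝ)) +
          (d3 • ((fun x1 _ => Real.exp (-b11 * x1) : ℝ → ℝ → ℝ)) +
          d4 • ((fun x1 x2 => x2 * Real.exp (-b11 * x1) : ℝ → ℝ → ℝ))))) =
        (h20 * d2) • ((fun _ _ => (1 : ℝ) : ℝ → ℝ → ℝ)) + ((0 : ℝ) • ((fun _ x2 => x2 : ℝ → ℝ → ℝ)) +
        (((q20 * b11 ^ 2 - g20 * b11) * d3 + h20 * d4) • ((fun x1 _ => Real.exp (-b11 * x1) : ℝ → ℝ → ℝ)) +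
        ((q20 * b11 ^ 2 - g20 * b11) * d4) • ((fun x1 x2 => x2 * Real.exp (-b11 * x1) : ℝ → ℝ → ℝ)))) :=
      funext fun x1 => funext fun x2 => by
        simp only [Pi.add_apply, Pi.smul_apply, smul_eq_mul]
        rw [L2]; ring
    rw [hfun]
    refine Submodule.add_mem _ (Submodule.smul_mem _ _ (Submodule.subset_span (Set.mem_insert _ _)))
      (Submodule.add_mem _ (Submodule.smul_mem _ _ (Submodule.subset_span
        (Set.mem_insert_of_mem _ (Set.mem_insert _ _))))
      (Submodule.add_mem _ (Submodule.smul_mem _ _ (Submodule.subset_span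
        (Set.mem_insert_of_mem _ (Set.mem_insert_of_mem _ (Set.mem_insert _ _)))))
      (Submodule.smul_mem _ _ (Submodule.subset_span
        (Set.mem_insert_of_mem _ (Set.mem_insert_of_mem _ (Set.mem_insert_of_mem _ rfl)))))))
end

section
/- Consider the coupled linear system on ℝ² × ℝ: ∂u_1/∂t = k_{10}(∂²u_1/∂x_1²) + q_{10}(∂²u_2/∂x_1²) + p_{10}(∂²u_1/∂x_2²) + q_{10}b_{11}(∂u_2/∂x_1) and ∂u_2/∂t = q_{20}(∂²u_2/∂x_1²) + c_{20}(∂²u_2/∂x_2²) + g_{20}(∂u_2/∂x_1), with real parameters and a_{10} > 0, b_{20} > 0. Set γ_0 = −k_{10}a_{10} − p_{10}b_{20} and γ_1 = q_{20}b_{11}² − c_{20}b_{20} − g_{20}b_{11}. Then for any A_{s,i} ∈ ℝ (s = 1,2; i = 1,2,3,4), the functions u_1(x_1,x_2,t) = e^{γ_0 t}[(A_{1,1}sin(√a_{10}x_1) + A_{1,3}cos(√a_{10}x_1))sin(√b_{20}x_2) + (A_{1,2}sin(√a_{10}x_1) + A_{1,4}cos(√a_{10}x_1))cos(√b_{20}x_2)]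 and u_2(x_1,x_2,t) = e^{−c_{20}b_{20}t}[A_{2,1}sin(√b_{20}x_2) + A_{2,2}cos(√b_{20}x_2)] + e^{γ_1 t}e^{−b_{11}x_1}[A_{2,3}sin(√b_{20}x_2) + A_{2,4}cos(√b_{20}x_2)] satisfy both equations for all (x_1,x_2,t) ∈ ℝ³. -/
private lemma hsin' (s x : ℝ) : HasDerivAt (fun y => Real.sin (s*y)) (s * Real.cos (s*x)) x := by
  simpa [mul_comm, Function.comp_def] using (Real.hasDerivAt_sin (s*x)).comp x ((hasDerivAt_id x).const_mul s)

private lemma hcos' (s x : ℝ) : HasDerivAt (fun y => Real.cos (s*y)) (-(s * Real.sin (s*x))) x := by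
  simpa [mul_comm, Function.comp_def] using (Real.hasDerivAt_cos (s*x)).comp x ((hasDerivAt_id x).const_mul s)

private lemma hexp' (s x : ℝ) : HasDerivAt (fun y => Real.exp (s*y)) (s * Real.exp (s*x)) x := by
  simpa [mul_comm, Function.comp_def] using (Real.hasDerivAt_exp (s*x)).comp x ((hasDerivAt_id x).const_mul s)

private lemma htrig (s c d x : ℝ) :
    HasDerivAt (fun y => c * Real.sin (s*y) + d * Real.cos (s*y))
      ((-(d*s)) * Real.sin (s*x) + (c*s) * Real.cos (s*x)) x := by
  have h := ((hsin' s x).const_mul c).add ((hcos' s x).const_mul d)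
  exact h.congr_deriv (by ring)

private lemma hcexp (P k s x : ℝ) :
    HasDerivAt (fun y => P + k * Real.exp (s*y)) ((k*s) * Real.exp (s*x)) x := by
  have h := ((hexp' s x).const_mul k).const_add P
  exact h.congr_deriv (by ring)

/-- The analytical solution of the coupled linear diffusion–convection system (61) of
Example 3.5 for α₁ = α₂ = 1. -/
theorem stmt_14 (k10 q10 p10 b11 q20 c20 g20 : ℝ) (a10 b20 : ℝ)
    (ha10 : 0 < a10) (hb20 : 0 < b20)
    (A : Fin 2 → Fin 4 → ℝ) (γ0 γ1 : ℝ)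
    (hγ0 : γ0 = -(k10 * a10) - p10 * b20)
    (hγ1 : γ1 = q20 * b11 ^ 2 - c20 * b20 - g20 * b11)
    (u1 u2 : ℝ → ℝ → ℝ → ℝ)
    (hu1 : ∀ x1 x2 t, u1 x1 x2 t =
      Real.exp (γ0 * t) *
        ((A 0 0 * Real.sin (Real.sqrt a10 * x1) + A 0 2 * Real.cos (Real.sqrt a10 * x1)) *
            Real.sin (Real.sqrt b20 * x2) +
         (A 0 1 * Real.sin (Real.sqrt a10 * x1) + A 0 3 * Real.cos (Real.sqrt a10 * x1)) *
            Real.cos (Real.sqrt b20 * x2)))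
    (hu2 : ∀ x1 x2 t, u2 x1 x2 t =
      Real.exp (-(c20 * b20) * t) *
        (A 1 0 * Real.sin (Real.sqrt b20 * x2) + A 1 1 * Real.cos (Real.sqrt b20 * x2)) +
      Real.exp (γ1 * t) * Real.exp (-b11 * x1) *
        (A 1 2 * Real.sin (Real.sqrt b20 * x2) + A 1 3 * Real.cos (Real.sqrt b20 * x2))) :
    ∀ (x1 x2 t : ℝ),
      deriv (fun τ => u1 x1 x2 τ) t =
        k10 * pd1 (pd1 (fun a b => u1 a b t)) x1 x2 +
        q10 * pd1 (pd1 (fun a b => u2 a b t)) x1 x2 +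
        p10 * pd2 (pd2 (fun a b => u1 a b t)) x1 x2 +
        q10 * b11 * pd1 (fun a b => u2 a b t) x1 x2 ∧
      deriv (fun τ => u2 x1 x2 τ) t =
        q20 * pd1 (pd1 (fun a b => u2 a b t)) x1 x2 +
        c20 * pd2 (pd2 (fun a b => u2 a b t)) x1 x2 +
        g20 * pd1 (fun a b => u2 a b t) x1 x2 := by
  intro x1 x2 t
  have hsa : Real.sqrt a10 * Real.sqrt a10 = a10 := Real.mul_self_sqrt ha10.le
  have hsb : Real.sqrt b20 * Real.sqrt b20 = b20 := Real.mul_self_sqrt hb20.le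
  set sa := Real.sqrt a10 with hsadef
  set sb := Real.sqrt b20 with hsbdef
  set S1 := Real.sin (sa * x1) with hS1
  set C1 := Real.cos (sa * x1) with hC1
  set S2 := Real.sin (sb * x2) with hS2
  set C2 := Real.cos (sb * x2) with hC2
  set E0 := Real.exp (γ0 * t) with hE0
  set E1 := Real.exp (-(c20 * b20) * t) with hE1
  set E2 := Real.exp (γ1 * t) with hE2
  set Eb := Real.exp (-b11 * x1) with hEb
  -- coefficients for u1 as a function of x1
  -- u1 z x2 t = c1 * sin(sa z) + d1 * cos(sa z)
  have inner1 : ∀ y, deriv (fun z => u1 z x2 t) y =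
      (-((E0*(A 0 2*S2 + A 0 3*C2))*sa)) * Real.sin (sa*y)
        + ((E0*(A 0 0*S2 + A 0 1*C2))*sa) * Real.cos (sa*y) := by
    intro y
    rw [show (fun z => u1 z x2 t)
        = (fun z => (E0*(A 0 0*S2 + A 0 1*C2)) * Real.sin (sa*z)
            + (E0*(A 0 2*S2 + A 0 3*C2)) * Real.cos (sa*z)) from
      funext fun z => by rw [hu1]; ring]
    exact (htrig sa _ _ y).deriv
  have pd11u1 : pd1 (pd1 (fun a b => u1 a b t)) x1 x2 =
      (-(((E0*(A 0 0*S2 + A 0 1*C2))*sa)*sa)) * S1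
        + ((-((E0*(A 0 2*S2 + A 0 3*C2))*sa))*sa) * C1 := by
    simp only [pd1]
    rw [show (fun y => deriv (fun z => u1 z x2 t) y)
        = (fun y => (-((E0*(A 0 2*S2 + A 0 3*C2))*sa)) * Real.sin (sa*y)
            + ((E0*(A 0 0*S2 + A 0 1*C2))*sa) * Real.cos (sa*y)) from funext inner1]
    exact (htrig sa _ _ x1).deriv
  -- u1 as a function of x2
  have inner2 : ∀ y, deriv (fun z => u1 x1 z t) y =
      (-((E0*(A 0 1*S1 + A 0 3*C1))*sb)) * Real.sin (sb*y)
        + ((E0*(A 0 0*S1 + A 0 2*C1))*sb) * Real.cos (sb*y) := by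
    intro y
    rw [show (fun z => u1 x1 z t)
        = (fun z => (E0*(A 0 0*S1 + A 0 2*C1)) * Real.sin (sb*z)
            + (E0*(A 0 1*S1 + A 0 3*C1)) * Real.cos (sb*z)) from
      funext fun z => by rw [hu1]; ring]
    exact (htrig sb _ _ y).deriv
  have pd22u1 : pd2 (pd2 (fun a b => u1 a b t)) x1 x2 =
      (-(((E0*(A 0 0*S1 + A 0 2*C1))*sb)*sb)) * S2
        + ((-((E0*(A 0 1*S1 + A 0 3*C1))*sb))*sb) * C2 := by
    simp only [pd2]
    rw [show (fun y => deriv (fun z => u1 x1 z t) y)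
        = (fun y => (-((E0*(A 0 1*S1 + A 0 3*C1))*sb)) * Real.sin (sb*y)
            + ((E0*(A 0 0*S1 + A 0 2*C1))*sb) * Real.cos (sb*y)) from funext inner2]
    exact (htrig sb _ _ x2).deriv
  -- u2 as a function of x1 : P + k * exp(-b11 * z)
  have inner3 : ∀ y, deriv (fun z => u2 z x2 t) y =
      ((E2*(A 1 2*S2 + A 1 3*C2))*(-b11)) * Real.exp ((-b11)*y) := by
    intro y
    rw [show (fun z => u2 z x2 t)
        = (fun z => (E1*(A 1 0*S2 + A 1 1*C2))
            + (E2*(A 1 2*S2 + A 1 3*C2)) * Real.exp ((-b11)*z)) from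
      funext fun z => by rw [hu2]; ring]
    exact (hcexp _ _ (-b11) y).deriv
  have pd1u2 : pd1 (fun a b => u2 a b t) x1 x2 =
      ((E2*(A 1 2*S2 + A 1 3*C2))*(-b11)) * Eb := by
    simp only [pd1]
    rw [inner3 x1, hEb]
  have pd11u2 : pd1 (pd1 (fun a b => u2 a b t)) x1 x2 =
      ((((E2*(A 1 2*S2 + A 1 3*C2))*(-b11))*(-b11))) * Eb := by
    simp only [pd1]
    rw [show (fun y => deriv (fun z => u2 z x2 t) y)
        = (fun y => (0:ℝ) + ((E2*(A 1 2*S2 + A 1 3*C2))*(-b11)) * Real.exp ((-b11)*y)) from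
      funext fun y => by rw [inner3 y]; ring]
    rw [(hcexp 0 _ (-b11) x1).deriv, hEb]
  -- u2 as a function of x2
  have inner4 : ∀ y, deriv (fun z => u2 x1 z t) y =
      (-((E1*(A 1 1) + E2*Eb*(A 1 3))*sb)) * Real.sin (sb*y)
        + ((E1*(A 1 0) + E2*Eb*(A 1 2))*sb) * Real.cos (sb*y) := by
    intro y
    rw [show (fun z => u2 x1 z t)
        = (fun z => (E1*(A 1 0) + E2*Eb*(A 1 2)) * Real.sin (sb*z)
            + (E1*(A 1 1) + E2*Eb*(A 1 3)) * Real.cos (sb*z)) from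
      funext fun z => by rw [hu2]; ring]
    exact (htrig sb _ _ y).deriv
  have pd22u2 : pd2 (pd2 (fun a b => u2 a b t)) x1 x2 =
      (-(((E1*(A 1 0) + E2*Eb*(A 1 2))*sb)*sb)) * S2
        + ((-((E1*(A 1 1) + E2*Eb*(A 1 3))*sb))*sb) * C2 := by
    simp only [pd2]
    rw [show (fun y => deriv (fun z => u2 x1 z t) y)
        = (fun y => (-((E1*(A 1 1) + E2*Eb*(A 1 3))*sb)) * Real.sin (sb*y)
            + ((E1*(A 1 0) + E2*Eb*(A 1 2))*sb) * Real.cos (sb*y)) from funext inner4]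
    exact (htrig sb _ _ x2).deriv
  -- time derivatives
  have dt1 : deriv (fun τ => u1 x1 x2 τ) t =
      (γ0 * E0) * ((A 0 0*S1 + A 0 2*C1)*S2 + (A 0 1*S1 + A 0 3*C1)*C2) := by
    rw [show (fun τ => u1 x1 x2 τ)
        = (fun τ => Real.exp (γ0*τ) *
            ((A 0 0*S1 + A 0 2*C1)*S2 + (A 0 1*S1 + A 0 3*C1)*C2)) from
      funext fun τ => by rw [hu1]]
    exact ((hexp' γ0 t).mul_const _).deriv
  have dt2 : deriv (fun τ => u2 x1 x2 τ) t =
      ((-(c20*b20)) * E1) * (A 1 0*S2 + A 1 1*C2)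
        + (γ1 * E2) * (Eb*(A 1 2*S2 + A 1 3*C2)) := by
    rw [show (fun τ => u2 x1 x2 τ)
        = (fun τ => Real.exp ((-(c20*b20))*τ) * (A 1 0*S2 + A 1 1*C2)
            + Real.exp (γ1*τ) * (Eb*(A 1 2*S2 + A 1 3*C2))) from
      funext fun τ => by rw [hu2]; ring]
    exact (((hexp' (-(c20*b20)) t).mul_const _).add ((hexp' γ1 t).mul_const _)).deriv
  constructor
  · rw [dt1, pd11u1, pd11u2, pd22u1, pd1u2, hγ0, ← hsa, ← hsb]
    ring
  · rw [dt2, pd11u2, pd22u2, pd1u2, hγ1, ← hsb]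
    ring
end

section
/- Consider the coupled linear system on ℝ² × ℝ in the wave (second order in time) regime: ∂²u_1/∂t² = k_{10}(∂²u_1/∂x_1²) + q_{10}(∂²u_2/∂x_1²) + p_{10}(∂²u_1/∂x_2²) + q_{10}b_{11}(∂u_2/∂x_1) and ∂²u_2/∂t² = q_{20}(∂²u_2/∂x_1²) + c_{20}(∂²u_2/∂x_2²) + g_{20}(∂u_2/∂x_1), with real parameters, a_{10} > 0, b_{20} > 0, and assume k_{10}a_{10} + p_{10}b_{20} > 0, c_{20}b_{20} > 0 and c_{20}b_{20} + g_{20}b_{11} − q_{20}b_{11}² > 0. Set ω_1 = √(k_{10}a_{10} + p_{10}b_{20}), ω_2 = √(c_{20}b_{20}), ω_3 = √(c_{20}b_{20} + g_{20}b_{11} − q_{20}b_{11}²). Then for any A_{s,i}, B_{s,i} ∈ ℝ, the functions u_1(x_1,x_2,t) = [A_{1,1}cos(ω_1 t) + B_{1,1}sin(ω_1 t)]·Φ_{1,1}(x) + [A_{1,2}cos(ω_1 t) + B_{1,2}sin(ω_1 t)]·Φ_{1,2}(x) + [A_{1,3}cos(ω_1 t) + B_{1,3}sin(ω_1 t)]·Φ_{1,3}(x)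 + [A_{1,4}cos(ω_1 t) + B_{1,4}sin(ω_1 t)]·Φ_{1,4}(x), where Φ_{1,1} = sin(√a_{10}x_1)sin(√b_{20}x_2), Φ_{1,2} = sin(√a_{10}x_1)cos(√b_{20}x_2), Φ_{1,3} = cos(√a_{10}x_1)sin(√b_{20}x_2), Φ_{1,4} = cos(√a_{10}x_1)cos(√b_{20}x_2), and u_2(x_1,x_2,t) = [A_{2,1}cos(ω_2 t) + B_{2,1}sin(ω_2 t)]sin(√b_{20}x_2) + [A_{2,2}cos(ω_2 t) + B_{2,2}sin(ω_2 t)]cos(√b_{20}x_2) + e^{−b_{11}x_1}([A_{2,3}cos(ω_3 t) + B_{2,3}sin(ω_3 t)]sin(√b_{20}x_2) + [A_{2,4}cos(ω_3 t) + B_{2,4}sin(ω_3 t)]cos(√b_{20}x_2)), satisfy both equations for all (x_1,x_2,t) ∈ ℝ³. -/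
noncomputable def shape (p q r s c d w v k : ℝ) : ℝ → ℝ := fun y =>
  p * Real.cos (w*y) + q * Real.sin (w*y) + r * Real.cos (v*y) + s * Real.sin (v*y)
    + c + d * Real.exp (k*y)

lemma shape_hasDerivAt (p q r s c d w v k t : ℝ) :
    HasDerivAt (shape p q r s c d w v k)
      (shape (q*w) (-(p*w)) (s*v) (-(r*v)) 0 (d*k) w v k t) t := by
  have hw : HasDerivAt (fun y : ℝ => w*y) w t := by simpa using (hasDerivAt_id t).const_mul w
  have hv : HasDerivAt (fun y : ℝ => v*y) v t := by simpa using (hasDerivAt_id t).const_mul v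
  have hk : HasDerivAt (fun y : ℝ => k*y) k t := by simpa using (hasDerivAt_id t).const_mul k
  have hc := (Real.hasDerivAt_cos (w*t)).comp t hw
  have hs := (Real.hasDerivAt_sin (w*t)).comp t hw
  have hc2 := (Real.hasDerivAt_cos (v*t)).comp t hv
  have hs2 := (Real.hasDerivAt_sin (v*t)).comp t hv
  have he := (Real.hasDerivAt_exp (k*t)).comp t hk
  have H := (((((hc.const_mul p).add (hs.const_mul q)).add (hc2.const_mul r)).add
      (hs2.const_mul s)).add (hasDerivAt_const t c)).add (he.const_mul d)
  refine H.congr_deriv ?_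
  simp only [shape]
  ring

lemma shape_deriv (p q r s c d w v k : ℝ) :
    deriv (shape p q r s c d w v k) = shape (q*w) (-(p*w)) (s*v) (-(r*v)) 0 (d*k) w v k :=
  funext fun t => (shape_hasDerivAt p q r s c d w v k t).deriv

/-- The analytical solution of the coupled linear diffusion-convection-wave system (61)
of Example 3.5 for α₁ = α₂ = 2 (the wave regime). -/
theorem stmt_15 (k10 q10 p10 b11 q20 c20 g20 : ℝ) (a10 b20 : ℝ)
    (ha10 : 0 < a10) (hb20 : 0 < b20)
    (h1 : 0 < k10 * a10 + p10 * b20) (h2 : 0 < c20 * b20)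
    (h3 : 0 < c20 * b20 + g20 * b11 - q20 * b11 ^ 2)
    (A B : Fin 2 → Fin 4 → ℝ) (ω1 ω2 ω3 : ℝ)
    (hω1 : ω1 = Real.sqrt (k10 * a10 + p10 * b20))
    (hω2 : ω2 = Real.sqrt (c20 * b20))
    (hω3 : ω3 = Real.sqrt (c20 * b20 + g20 * b11 - q20 * b11 ^ 2))
    (u1 u2 : ℝ → ℝ → ℝ → ℝ)
    (hu1 : ∀ x1 x2 t, u1 x1 x2 t =
      (A 0 0 * Real.cos (ω1 * t) + B 0 0 * Real.sin (ω1 * t)) *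
        (Real.sin (Real.sqrt a10 * x1) * Real.sin (Real.sqrt b20 * x2)) +
      (A 0 1 * Real.cos (ω1 * t) + B 0 1 * Real.sin (ω1 * t)) *
        (Real.sin (Real.sqrt a10 * x1) * Real.cos (Real.sqrt b20 * x2)) +
      (A 0 2 * Real.cos (ω1 * t) + B 0 2 * Real.sin (ω1 * t)) *
        (Real.cos (Real.sqrt a10 * x1) * Real.sin (Real.sqrt b20 * x2)) +
      (A 0 3 * Real.cos (ω1 * t) + B 0 3 * Real.sin (ω1 * t)) *
        (Real.cos (Real.sqrt a10 * x1) * Real.cos (Real.sqrt b20 * x2)))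
    (hu2 : ∀ x1 x2 t, u2 x1 x2 t =
      (A 1 0 * Real.cos (ω2 * t) + B 1 0 * Real.sin (ω2 * t)) *
        Real.sin (Real.sqrt b20 * x2) +
      (A 1 1 * Real.cos (ω2 * t) + B 1 1 * Real.sin (ω2 * t)) *
        Real.cos (Real.sqrt b20 * x2) +
      Real.exp (-b11 * x1) *
        ((A 1 2 * Real.cos (ω3 * t) + B 1 2 * Real.sin (ω3 * t)) *
            Real.sin (Real.sqrt b20 * x2) +
         (A 1 3 * Real.cos (ω3 * t) + B 1 3 * Real.sin (ω3 * t)) *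
            Real.cos (Real.sqrt b20 * x2))) :
    ∀ (x1 x2 t : ℝ),
      deriv (fun τ => deriv (fun σ => u1 x1 x2 σ) τ) t =
        k10 * pd1 (pd1 (fun a b => u1 a b t)) x1 x2 +
        q10 * pd1 (pd1 (fun a b => u2 a b t)) x1 x2 +
        p10 * pd2 (pd2 (fun a b => u1 a b t)) x1 x2 +
        q10 * b11 * pd1 (fun a b => u2 a b t) x1 x2 ∧
      deriv (fun τ => deriv (fun σ => u2 x1 x2 σ) τ) t =
        q20 * pd1 (pd1 (fun a b => u2 a b t)) x1 x2 +
        c20 * pd2 (pd2 (fun a b => u2 a b t)) x1 x2 +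
        g20 * pd1 (fun a b => u2 a b t) x1 x2 := by
  intro x1 x2 t
  have hsa : Real.sqrt a10 ^ 2 = a10 := Real.sq_sqrt ha10.le
  have hsb : Real.sqrt b20 ^ 2 = b20 := Real.sq_sqrt hb20.le
  have hw1 : ω1 ^ 2 = k10 * a10 + p10 * b20 := by rw [hω1]; exact Real.sq_sqrt h1.le
  have hw2 : ω2 ^ 2 = c20 * b20 := by rw [hω2]; exact Real.sq_sqrt h2.le
  have hw3 : ω3 ^ 2 = c20 * b20 + g20 * b11 - q20 * b11 ^ 2 := by
    rw [hω3]; exact Real.sq_sqrt h3.le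
  have e_t1 : (fun σ => u1 x1 x2 σ) = shape
      (A 0 0 * (Real.sin (Real.sqrt a10 * x1) * Real.sin (Real.sqrt b20 * x2)) +
        A 0 1 * (Real.sin (Real.sqrt a10 * x1) * Real.cos (Real.sqrt b20 * x2)) +
        A 0 2 * (Real.cos (Real.sqrt a10 * x1) * Real.sin (Real.sqrt b20 * x2)) +
        A 0 3 * (Real.cos (Real.sqrt a10 * x1) * Real.cos (Real.sqrt b20 * x2)))
      (B 0 0 * (Real.sin (Real.sqrt a10 * x1) * Real.sin (Real.sqrt b20 * x2)) +
        B 0 1 * (Real.sin (Real.sqrt a10 * x1) * Real.cos (Real.sqrt b20 * x2)) +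
        B 0 2 * (Real.cos (Real.sqrt a10 * x1) * Real.sin (Real.sqrt b20 * x2)) +
        B 0 3 * (Real.cos (Real.sqrt a10 * x1) * Real.cos (Real.sqrt b20 * x2)))
      0 0 0 0 ω1 0 0 := by
    funext σ; rw [hu1]; simp only [shape]; ring
  have e_x1u1 : (fun y => u1 y x2 t) = shape
      ((A 0 2 * Real.cos (ω1 * t) + B 0 2 * Real.sin (ω1 * t)) * Real.sin (Real.sqrt b20 * x2) +
        (A 0 3 * Real.cos (ω1 * t) + B 0 3 * Real.sin (ω1 * t)) * Real.cos (Real.sqrt b20 * x2))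
      ((A 0 0 * Real.cos (ω1 * t) + B 0 0 * Real.sin (ω1 * t)) * Real.sin (Real.sqrt b20 * x2) +
        (A 0 1 * Real.cos (ω1 * t) + B 0 1 * Real.sin (ω1 * t)) * Real.cos (Real.sqrt b20 * x2))
      0 0 0 0 (Real.sqrt a10) 0 0 := by
    funext y; rw [hu1]; simp only [shape]; ring
  have e_x2u1 : (fun y => u1 x1 y t) = shape
      ((A 0 1 * Real.cos (ω1 * t) + B 0 1 * Real.sin (ω1 * t)) * Real.sin (Real.sqrt a10 * x1) +
        (A 0 3 * Real.cos (ω1 * t) + B 0 3 * Real.sin (ω1 * t)) * Real.cos (Real.sqrt a10 * x1))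
      ((A 0 0 * Real.cos (ω1 * t) + B 0 0 * Real.sin (ω1 * t)) * Real.sin (Real.sqrt a10 * x1) +
        (A 0 2 * Real.cos (ω1 * t) + B 0 2 * Real.sin (ω1 * t)) * Real.cos (Real.sqrt a10 * x1))
      0 0 0 0 (Real.sqrt b20) 0 0 := by
    funext y; rw [hu1]; simp only [shape]; ring
  have e_t2 : (fun σ => u2 x1 x2 σ) = shape
      (A 1 0 * Real.sin (Real.sqrt b20 * x2) + A 1 1 * Real.cos (Real.sqrt b20 * x2))
      (B 1 0 * Real.sin (Real.sqrt b20 * x2) + B 1 1 * Real.cos (Real.sqrt b20 * x2))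
      (Real.exp (-b11 * x1) *
        (A 1 2 * Real.sin (Real.sqrt b20 * x2) + A 1 3 * Real.cos (Real.sqrt b20 * x2)))
      (Real.exp (-b11 * x1) *
        (B 1 2 * Real.sin (Real.sqrt b20 * x2) + B 1 3 * Real.cos (Real.sqrt b20 * x2)))
      0 0 ω2 ω3 0 := by
    funext σ; rw [hu2]; simp only [shape]; ring
  have e_x1u2 : (fun y => u2 y x2 t) = shape 0 0 0 0
      ((A 1 0 * Real.cos (ω2 * t) + B 1 0 * Real.sin (ω2 * t)) * Real.sin (Real.sqrt b20 * x2) +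
        (A 1 1 * Real.cos (ω2 * t) + B 1 1 * Real.sin (ω2 * t)) * Real.cos (Real.sqrt b20 * x2))
      ((A 1 2 * Real.cos (ω3 * t) + B 1 2 * Real.sin (ω3 * t)) * Real.sin (Real.sqrt b20 * x2) +
        (A 1 3 * Real.cos (ω3 * t) + B 1 3 * Real.sin (ω3 * t)) * Real.cos (Real.sqrt b20 * x2))
      0 0 (-b11) := by
    funext y; rw [hu2]; simp only [shape, neg_mul]; ring
  have e_x2u2 : (fun y => u2 x1 y t) = shape
      ((A 1 1 * Real.cos (ω2 * t) + B 1 1 * Real.sin (ω2 * t)) +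
        Real.exp (-b11 * x1) * (A 1 3 * Real.cos (ω3 * t) + B 1 3 * Real.sin (ω3 * t)))
      ((A 1 0 * Real.cos (ω2 * t) + B 1 0 * Real.sin (ω2 * t)) +
        Real.exp (-b11 * x1) * (A 1 2 * Real.cos (ω3 * t) + B 1 2 * Real.sin (ω3 * t)))
      0 0 0 0 (Real.sqrt b20) 0 0 := by
    funext y; rw [hu2]; simp only [shape]; ring
  constructor
  · simp only [pd1, pd2, e_t1, e_x1u1, e_x2u1, e_x1u2]
    simp only [shape_deriv]
    simp only [shape]
    ring_nf
    rw [hw1, hsa, hsb]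
    ring
  · simp only [pd1, pd2, e_t2, e_x1u2, e_x2u2]
    simp only [shape_deriv]
    simp only [shape]
    ring_nf
    rw [hw2, hw3, hsb]
    ring
end

section
/- Let K_1, K_2 be the operators defined in the context with η_{10} = d_{10} = g_{20} = h_{20} = 0, and let a_{20} > 0, b_{20} > 0 and A_{s,i} ∈ ℝ (s = 1,2; i = 1,2,3,4). Then the functions u_1(x_1,x_2,t) = e^{−p_{10}a_{20}t}[(A_{1,1} + A_{1,3}x_1)sin(√a_{20}x_2) + (A_{1,2} + A_{1,4}x_1)cos(√a_{20}x_2)] and u_2(x_1,x_2,t) = e^{−c_{20}b_{20}t}[(A_{2,1} + A_{2,3}x_1)sin(√b_{20}x_2) + (A_{2,2} + A_{2,4}x_1)cos(√b_{20}x_2)] satisfy, for all (x_1,x_2,t) ∈ ℝ³ and s = 1,2, ∂u_s/∂t(x_1,x_2,t) = K_s(u_1(·,·,t), u_2(·,·,t))(x_1,x_2); here the nonlinear x_1-bracket terms cancel identically because both ∂u_1/∂x_1 and ∂u_2/∂x_1 are independent of x_1. -/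
lemma deriv_affine_s16 (c0 c1 x : ℝ) : deriv (fun a => c0 + c1 * a) x = c1 := by
  simpa using (((hasDerivAt_id x).const_mul c1).const_add c0).deriv

lemma L1 (E a1 a2 a3 a4 S C x : ℝ) :
    deriv (fun y => E * ((a1 + a3 * y) * S + (a2 + a4 * y) * C)) x
      = E * (a3 * S + a4 * C) := by
  have h : (fun y : ℝ => E * ((a1 + a3 * y) * S + (a2 + a4 * y) * C))
      = fun y => E * (a1 * S + a2 * C) + (E * (a3 * S + a4 * C)) * y := by
    funext y; ring
  rw [h, deriv_affine_s16]

lemma L2 (E c1 c2 s x : ℝ) :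
    deriv (fun y => E * (c1 * Real.sin (s * y) + c2 * Real.cos (s * y))) x
      = E * ((-(c2 * s)) * Real.sin (s * x) + (c1 * s) * Real.cos (s * x)) := by
  have h1 : HasDerivAt (fun y : ℝ => s * y) s x := by
    simpa using (hasDerivAt_id x).const_mul s
  have h : deriv (fun y => E * (c1 * Real.sin (s * y) + c2 * Real.cos (s * y))) x = _ :=
    (((h1.sin.const_mul c1).add (h1.cos.const_mul c2)).const_mul E).deriv
  rw [h]; ring

lemma L3 (k q q0 E1 E2 a0 a1 a2 a3 b0 b1 b2 b3 S1 C1 S2 C2 P Q x : ℝ) :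
    deriv (fun a => (k - q * (E2 * ((b0 + b2 * a) * S2 + (b1 + b3 * a) * C2))) * P
      + (q * (E1 * ((a0 + a2 * a) * S1 + (a1 + a3 * a) * C1)) + q0) * Q) x
    = -(q * (E2 * (b2 * S2 + b3 * C2))) * P + q * (E1 * (a2 * S1 + a3 * C1)) * Q := by
  have h : (fun a : ℝ => (k - q * (E2 * ((b0 + b2 * a) * S2 + (b1 + b3 * a) * C2))) * P
      + (q * (E1 * ((a0 + a2 * a) * S1 + (a1 + a3 * a) * C1)) + q0) * Q)
      = fun a => ((k - q * (E2 * (b0 * S2 + b1 * C2))) * P + (q * (E1 * (a0 * S1 + a1 * C1)) + q0) * Q)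
        + (-(q * (E2 * (b2 * S2 + b3 * C2))) * P + q * (E1 * (a2 * S1 + a3 * C1)) * Q) * a := by
    funext a; ring
  rw [h, deriv_affine_s16]

lemma L4 (c K t : ℝ) : deriv (fun τ => Real.exp (c * τ) * K) t = c * (Real.exp (c * t) * K) := by
  have h1 : HasDerivAt (fun τ : ℝ => c * τ) c t := by simpa using (hasDerivAt_id t).const_mul c
  rw [(h1.exp.mul_const K).deriv]; ring


/-- The first operator `K₁` of the system (67) of Example 3.6. -/
noncomputable def Kop1 (k10 q10 q11 p10 e10 d10 : ℝ) (u1 u2 : ℝ → ℝ → ℝ) : ℝ → ℝ → ℝ :=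
  fun x1 x2 =>
    pd1 (fun a b => (k10 - q11 * u2 a b) * pd1 u1 a b + (q11 * u1 a b + q10) * pd1 u2 a b) x1 x2 +
    p10 * pd2 (pd2 u1) x1 x2 + e10 * pd1 u1 x1 x2 + d10 * pd2 u1 x1 x2

/-- The second operator `K₂` of the system (67) of Example 3.6. -/
noncomputable def Kop2 (k20 q20 q21 c20 g20 h20 : ℝ) (u1 u2 : ℝ → ℝ → ℝ) : ℝ → ℝ → ℝ :=
  fun x1 x2 =>
    pd1 (fun a b => (k20 - q21 * u2 a b) * pd1 u1 a b + (q21 * u1 a b + q20) * pd1 u2 a b) x1 x2 +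
    c20 * pd2 (pd2 u2) x1 x2 + g20 * pd1 u2 x1 x2 + h20 * pd2 u2 x1 x2

/-- The analytical solution (71) of Example 3.6 for α₁ = α₂ = 1, with
η₁₀ = d₁₀ = g₂₀ = h₂₀ = 0. -/
theorem stmt_16 (k10 q10 q11 p10 e10 d10 : ℝ) (k20 q20 q21 c20 g20 h20 : ℝ)
    (he10 : e10 = 0) (hd10 : d10 = 0) (hg20 : g20 = 0) (hh20 : h20 = 0)
    (a20 b20 : ℝ) (ha20 : 0 < a20) (hb20 : 0 < b20)
    (A : Fin 2 → Fin 4 → ℝ)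
    (u1 u2 : ℝ → ℝ → ℝ → ℝ)
    (hu1 : ∀ x1 x2 t, u1 x1 x2 t =
      Real.exp (-(p10 * a20) * t) *
        ((A 0 0 + A 0 2 * x1) * Real.sin (Real.sqrt a20 * x2) +
         (A 0 1 + A 0 3 * x1) * Real.cos (Real.sqrt a20 * x2)))
    (hu2 : ∀ x1 x2 t, u2 x1 x2 t =
      Real.exp (-(c20 * b20) * t) *
        ((A 1 0 + A 1 2 * x1) * Real.sin (Real.sqrt b20 * x2) +
         (A 1 1 + A 1 3 * x1) * Real.cos (Real.sqrt b20 * x2))) :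
    ∀ (x1 x2 t : ℝ),
      deriv (fun τ => u1 x1 x2 τ) t =
        Kop1 k10 q10 q11 p10 e10 d10
          (fun a b => u1 a b t) (fun a b => u2 a b t) x1 x2 ∧
      deriv (fun τ => u2 x1 x2 τ) t =
        Kop2 k20 q20 q21 c20 g20 h20
          (fun a b => u1 a b t) (fun a b => u2 a b t) x1 x2 := by
  intro x1 x2 t
  have h1 : Real.sqrt a20 * Real.sqrt a20 = a20 := Real.mul_self_sqrt ha20.le
  have h2 : Real.sqrt b20 * Real.sqrt b20 = b20 := Real.mul_self_sqrt hb20.le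
  constructor
  · simp only [Kop1, pd1, pd2, hu1, hu2, he10, hd10, L1, L2, L3, L4, zero_mul, add_zero]
    linear_combination (p10 * Real.exp (-(p10 * a20) * t) *
      ((A 0 0 + A 0 2 * x1) * Real.sin (Real.sqrt a20 * x2) +
       (A 0 1 + A 0 3 * x1) * Real.cos (Real.sqrt a20 * x2))) * h1
  · simp only [Kop2, pd1, pd2, hu1, hu2, hg20, hh20, L1, L2, L3, L4, zero_mul, add_zero]
    linear_combination (c20 * Real.exp (-(c20 * b20) * t) *
      ((A 1 0 + A 1 2 * x1) * Real.sin (Real.sqrt b20 * x2) +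
       (A 1 1 + A 1 3 * x1) * Real.cos (Real.sqrt b20 * x2))) * h2
end

section
/- Let M_1, M_2 be the operators defined in the context, with a_{10} > 0 and b_{20} > 0. Let V_1 be the ℝ-linear span of the four functions (x_1,x_2) ↦ sin(√a_{10}x_1)sin(√b_{20}x_2), cos(√a_{10}x_1)sin(√b_{20}x_2), sin(√a_{10}x_1)cos(√b_{20}x_2), cos(√a_{10}x_1)cos(√b_{20}x_2), and let V_2 be the ℝ-linear span of (x_1,x_2) ↦ sin(√b_{20}x_2), cos(√b_{20}x_2), x_1 sin(√b_{20}x_2), x_1 cos(√b_{20}x_2). Then for all u_1 ∈ V_1 and u_2 ∈ V_2, the nonlinear brackets cancel (since ∂²u_1/∂x_2² = −b_{20}u_1 and ∂²u_2/∂x_2² = −b_{20}u_2, one has ∂/∂x_2[c(u_1 ∂u_2/∂x_2 − u_2 ∂u_1/∂x_2)] = 0 for any constant c), and M_1(u_1,u_2) = k_{10}(∂²u_1/∂x_1²) + p_{10}(∂²u_1/∂x_2²) + η_{10}(∂u_1/∂x_1) + d_{10}(∂u_1/∂x_2) ∈ V_1, while M_2(u_1,u_2) = q_{20}(∂²u_2/∂x_1²)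 + c_{20}(∂²u_2/∂x_2²) + g_{20}(∂u_2/∂x_1) + h_{20}(∂u_2/∂x_2) ∈ V_2; i.e., the product linear space V_1 × V_2 is invariant under (M_1, M_2). -/
/-- The first operator `M₁` of case 4 of Table 1. -/
noncomputable def Mop1 (k10 p10 c11 e10 d10 : ℝ) (u1 u2 : ℝ → ℝ → ℝ) : ℝ → ℝ → ℝ :=
  fun x1 x2 =>
    k10 * pd1 (pd1 u1) x1 x2 +
    pd2 (fun a b => (p10 - c11 * u2 a b) * pd2 u1 a b + c11 * u1 a b * pd2 u2 a b) x1 x2 +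
    e10 * pd1 u1 x1 x2 + d10 * pd2 u1 x1 x2

/-- The second operator `M₂` of case 4 of Table 1. -/
noncomputable def Mop2 (q20 c20 c21 g20 h20 : ℝ) (u1 u2 : ℝ → ℝ → ℝ) : ℝ → ℝ → ℝ :=
  fun x1 x2 =>
    q20 * pd1 (pd1 u2) x1 x2 +
    pd2 (fun a b => -(c21 * u2 a b) * pd2 u1 a b + (c21 * u1 a b + c20) * pd2 u2 a b) x1 x2 +
    g20 * pd1 u2 x1 x2 + h20 * pd2 u2 x1 x2

lemma hasDerivAt_form (p q t b : ℝ) :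
    HasDerivAt (fun y => p * Real.sin (t * y) + q * Real.cos (t * y))
      (-(t * q) * Real.sin (t * b) + (t * p) * Real.cos (t * b)) b := by
  have hl : HasDerivAt (fun y : ℝ => t * y) t b := by
    simpa using (hasDerivAt_id b).const_mul t
  have hs : HasDerivAt (fun y => Real.sin (t * y)) (Real.cos (t * b) * t) b :=
    (Real.hasDerivAt_sin (t * b)).comp b hl
  have hc : HasDerivAt (fun y => Real.cos (t * y)) (-Real.sin (t * b) * t) b :=
    (Real.hasDerivAt_cos (t * b)).comp b hl
  have h := (hs.const_mul p).add (hc.const_mul q)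
  exact h.congr_deriv (by ring)

lemma pd2_canon (u : ℝ → ℝ → ℝ) (P Q K : ℝ → ℝ) (t : ℝ)
    (hu : ∀ a b, u a b = P a * Real.sin (t * b) + Q a * Real.cos (t * b) + K a) :
    pd2 u = fun a b => -(t * Q a) * Real.sin (t * b) + (t * P a) * Real.cos (t * b) := by
  funext a b
  have h : (fun y => u a y)
      = fun y => P a * Real.sin (t * y) + Q a * Real.cos (t * y) + K a :=
    funext fun y => hu a y
  show deriv (fun y => u a y) b = _
  rw [h]
  exact ((hasDerivAt_form (P a) (Q a) t b).add_const (K a)).deriv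

lemma pd1_canon (u : ℝ → ℝ → ℝ) (P Q P' Q' : ℝ → ℝ) (t : ℝ)
    (hP : ∀ a, HasDerivAt P (P' a) a) (hQ : ∀ a, HasDerivAt Q (Q' a) a)
    (hu : ∀ a b, u a b = P a * Real.sin (t * b) + Q a * Real.cos (t * b)) :
    pd1 u = fun a b => P' a * Real.sin (t * b) + Q' a * Real.cos (t * b) := by
  funext a b
  have h : (fun y => u y b) = fun y => P y * Real.sin (t * b) + Q y * Real.cos (t * b) :=
    funext fun y => hu y b
  show deriv (fun y => u y b) a = _
  rw [h]
  exact (((hP a).mul_const _).add ((hQ a).mul_const _)).deriv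

lemma mem_span4_s17 {g1 g2 g3 g4 w : ℝ → ℝ → ℝ} (A B C D : ℝ)
    (hw : w = A • g1 + B • g2 + C • g3 + D • g4) :
    w ∈ Submodule.span ℝ ({g1, g2, g3, g4} : Set (ℝ → ℝ → ℝ)) := by
  rw [hw]
  have h1 : g1 ∈ Submodule.span ℝ ({g1, g2, g3, g4} : Set (ℝ → ℝ → ℝ)) :=
    Submodule.subset_span (by simp)
  have h2 : g2 ∈ Submodule.span ℝ ({g1, g2, g3, g4} : Set (ℝ → ℝ → ℝ)) :=
    Submodule.subset_span (by simp)
  have h3 : g3 ∈ Submodule.span ℝ ({g1, g2, g3, g4} : Set (ℝ → ℝ → ℝ)) :=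
    Submodule.subset_span (by simp)
  have h4 : g4 ∈ Submodule.span ℝ ({g1, g2, g3, g4} : Set (ℝ → ℝ → ℝ)) :=
    Submodule.subset_span (by simp)
  exact add_mem (add_mem (add_mem (Submodule.smul_mem _ _ h1) (Submodule.smul_mem _ _ h2))
    (Submodule.smul_mem _ _ h3)) (Submodule.smul_mem _ _ h4)

lemma span4_elim {g1 g2 g3 g4 w : ℝ → ℝ → ℝ}
    (hw : w ∈ Submodule.span ℝ ({g1, g2, g3, g4} : Set (ℝ → ℝ → ℝ))) :
    ∃ A B C D : ℝ, w = A • g1 + B • g2 + C • g3 + D • g4 := by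
  rw [Submodule.mem_span_insert] at hw
  obtain ⟨A, z, hz, rfl⟩ := hw
  rw [Submodule.mem_span_insert] at hz
  obtain ⟨B, z2, hz2, rfl⟩ := hz
  rw [Submodule.mem_span_insert] at hz2
  obtain ⟨C, z3, hz3, rfl⟩ := hz2
  rw [Submodule.mem_span_singleton] at hz3
  obtain ⟨D, rfl⟩ := hz3
  exact ⟨A, B, C, D, by abel⟩


/-- On `V₁ × V₂` the nonlinear brackets of `(M₁, M₂)` cancel and the product space
`V₁ × V₂` is invariant under `(M₁, M₂)` (case 4 of Table 1). -/
theorem stmt_17 (k10 p10 c11 e10 d10 : ℝ) (q20 c20 c21 g20 h20 : ℝ)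
    (a10 b20 : ℝ) (ha10 : 0 < a10) (hb20 : 0 < b20)
    (V1 V2 : Submodule ℝ (ℝ → ℝ → ℝ))
    (hV1 : V1 = Submodule.span ℝ
      ({fun x1 x2 => Real.sin (Real.sqrt a10 * x1) * Real.sin (Real.sqrt b20 * x2),
        fun x1 x2 => Real.cos (Real.sqrt a10 * x1) * Real.sin (Real.sqrt b20 * x2),
        fun x1 x2 => Real.sin (Real.sqrt a10 * x1) * Real.cos (Real.sqrt b20 * x2),
        fun x1 x2 => Real.cos (Real.sqrt a10 * x1) * Real.cos (Real.sqrt b20 * x2)} :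
        Set (ℝ → ℝ → ℝ)))
    (hV2 : V2 = Submodule.span ℝ
      ({fun _ x2 => Real.sin (Real.sqrt b20 * x2),
        fun _ x2 => Real.cos (Real.sqrt b20 * x2),
        fun x1 x2 => x1 * Real.sin (Real.sqrt b20 * x2),
        fun x1 x2 => x1 * Real.cos (Real.sqrt b20 * x2)} : Set (ℝ → ℝ → ℝ))) :
    ∀ u1 u2 : ℝ → ℝ → ℝ, u1 ∈ V1 → u2 ∈ V2 →
      (∀ (c : ℝ) (x1 x2 : ℝ),
        pd2 (fun a b => c * (u1 a b * pd2 u2 a b - u2 a b * pd2 u1 a b)) x1 x2 = 0) ∧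
      (∀ x1 x2 : ℝ,
        Mop1 k10 p10 c11 e10 d10 u1 u2 x1 x2 =
          k10 * pd1 (pd1 u1) x1 x2 + p10 * pd2 (pd2 u1) x1 x2 +
          e10 * pd1 u1 x1 x2 + d10 * pd2 u1 x1 x2) ∧
      Mop1 k10 p10 c11 e10 d10 u1 u2 ∈ V1 ∧
      (∀ x1 x2 : ℝ,
        Mop2 q20 c20 c21 g20 h20 u1 u2 x1 x2 =
          q20 * pd1 (pd1 u2) x1 x2 + c20 * pd2 (pd2 u2) x1 x2 +
          g20 * pd1 u2 x1 x2 + h20 * pd2 u2 x1 x2) ∧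
      Mop2 q20 c20 c21 g20 h20 u1 u2 ∈ V2 := by
  
  intro u1 u2 hu1m hu2m
  rw [hV1] at hu1m
  rw [hV2] at hu2m
  set s := Real.sqrt a10 with hs
  set t := Real.sqrt b20 with ht
  obtain ⟨A, B, C, D, hw1⟩ := span4_elim hu1m
  obtain ⟨E, F, G, H, hw2⟩ := span4_elim hu2m
  have hu1 : ∀ a b, u1 a b =
      (A * Real.sin (s * a) + B * Real.cos (s * a)) * Real.sin (t * b) +
      (C * Real.sin (s * a) + D * Real.cos (s * a)) * Real.cos (t * b) := by
    intro a b
    rw [hw1]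
    simp only [Pi.add_apply, Pi.smul_apply, smul_eq_mul]
    ring
  have hu2 : ∀ a b, u2 a b =
      (E + G * a) * Real.sin (t * b) + (F + H * a) * Real.cos (t * b) := by
    intro a b
    rw [hw2]
    simp only [Pi.add_apply, Pi.smul_apply, smul_eq_mul]
    ring
  -- second-variable derivatives
  have h2u1 : pd2 u1 = fun a b =>
      -(t * (C * Real.sin (s * a) + D * Real.cos (s * a))) * Real.sin (t * b) +
      (t * (A * Real.sin (s * a) + B * Real.cos (s * a))) * Real.cos (t * b) :=
    pd2_canon u1 (fun a => A * Real.sin (s * a) + B * Real.cos (s * a))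
      (fun a => C * Real.sin (s * a) + D * Real.cos (s * a)) (fun _ => 0) t
      (fun a b => by rw [hu1 a b]; ring)
  have h22u1 : pd2 (pd2 u1) = fun a b =>
      -(t * (t * (A * Real.sin (s * a) + B * Real.cos (s * a)))) * Real.sin (t * b) +
      (t * (-(t * (C * Real.sin (s * a) + D * Real.cos (s * a))))) * Real.cos (t * b) :=
    pd2_canon (pd2 u1) (fun a => -(t * (C * Real.sin (s * a) + D * Real.cos (s * a))))
      (fun a => t * (A * Real.sin (s * a) + B * Real.cos (s * a))) (fun _ => 0) t
      (fun a b => by simp only [h2u1]; ring)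
  have h2u2 : pd2 u2 = fun a b =>
      -(t * (F + H * a)) * Real.sin (t * b) + (t * (E + G * a)) * Real.cos (t * b) :=
    pd2_canon u2 (fun a => E + G * a) (fun a => F + H * a) (fun _ => 0) t
      (fun a b => by rw [hu2 a b]; ring)
  have h22u2 : pd2 (pd2 u2) = fun a b =>
      -(t * (t * (E + G * a))) * Real.sin (t * b) +
      (t * (-(t * (F + H * a)))) * Real.cos (t * b) :=
    pd2_canon (pd2 u2) (fun a => -(t * (F + H * a))) (fun a => t * (E + G * a)) (fun _ => 0) t
      (fun a b => by simp only [h2u2]; ring)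
  -- first-variable derivatives
  have h1u1 : pd1 u1 = fun a b =>
      (-(s * B) * Real.sin (s * a) + (s * A) * Real.cos (s * a)) * Real.sin (t * b) +
      (-(s * D) * Real.sin (s * a) + (s * C) * Real.cos (s * a)) * Real.cos (t * b) :=
    pd1_canon u1 (fun a => A * Real.sin (s * a) + B * Real.cos (s * a))
      (fun a => C * Real.sin (s * a) + D * Real.cos (s * a))
      (fun a => -(s * B) * Real.sin (s * a) + (s * A) * Real.cos (s * a))
      (fun a => -(s * D) * Real.sin (s * a) + (s * C) * Real.cos (s * a)) t
      (fun a => hasDerivAt_form A B s a) (fun a => hasDerivAt_form C D s a) hu1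
  have h11u1 : pd1 (pd1 u1) = fun a b =>
      (-(s * (s * A)) * Real.sin (s * a) + (s * -(s * B)) * Real.cos (s * a)) * Real.sin (t * b) +
      (-(s * (s * C)) * Real.sin (s * a) + (s * -(s * D)) * Real.cos (s * a)) * Real.cos (t * b) :=
    pd1_canon (pd1 u1)
      (fun a => -(s * B) * Real.sin (s * a) + (s * A) * Real.cos (s * a))
      (fun a => -(s * D) * Real.sin (s * a) + (s * C) * Real.cos (s * a))
      (fun a => -(s * (s * A)) * Real.sin (s * a) + (s * -(s * B)) * Real.cos (s * a))
      (fun a => -(s * (s * C)) * Real.sin (s * a) + (s * -(s * D)) * Real.cos (s * a)) t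
      (fun a => hasDerivAt_form (-(s * B)) (s * A) s a)
      (fun a => hasDerivAt_form (-(s * D)) (s * C) s a)
      (fun a b => by simp only [h1u1])
  have hP2 : ∀ a : ℝ, HasDerivAt (fun a => E + G * a) G a := fun a => by
    simpa using ((hasDerivAt_id a).const_mul G).const_add E
  have hQ2 : ∀ a : ℝ, HasDerivAt (fun a => F + H * a) H a := fun a => by
    simpa using ((hasDerivAt_id a).const_mul H).const_add F
  have h1u2 : pd1 u2 = fun a b => G * Real.sin (t * b) + H * Real.cos (t * b) :=
    pd1_canon u2 (fun a => E + G * a) (fun a => F + H * a) (fun _ => G) (fun _ => H) t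
      hP2 hQ2 hu2
  have h11u2 : pd1 (pd1 u2) = fun a b =>
      (0 : ℝ) * Real.sin (t * b) + (0 : ℝ) * Real.cos (t * b) :=
    pd1_canon (pd1 u2) (fun _ => G) (fun _ => H) (fun _ => 0) (fun _ => 0) t
      (fun a => hasDerivAt_const a G) (fun a => hasDerivAt_const a H)
      (fun a b => by simp only [h1u2])
  -- nonlinear terms
  have hwm1 : pd2 (fun a b =>
        (p10 - c11 * u2 a b) * pd2 u1 a b + c11 * u1 a b * pd2 u2 a b) = fun a b =>
      -(t * (p10 * (t * (A * Real.sin (s * a) + B * Real.cos (s * a))))) * Real.sin (t * b) +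
      (t * (p10 * (-(t * (C * Real.sin (s * a) + D * Real.cos (s * a)))))) * Real.cos (t * b) :=
    pd2_canon _
      (fun a => p10 * (-(t * (C * Real.sin (s * a) + D * Real.cos (s * a)))))
      (fun a => p10 * (t * (A * Real.sin (s * a) + B * Real.cos (s * a))))
      (fun a => c11 * (t * ((C * Real.sin (s * a) + D * Real.cos (s * a)) * (E + G * a) -
        (A * Real.sin (s * a) + B * Real.cos (s * a)) * (F + H * a)))) t
      (fun a b => by
        simp only [h2u1, h2u2, hu1 a b, hu2 a b]
        linear_combination (c11 * (t * ((C * Real.sin (s * a) + D * Real.cos (s * a)) *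
          (E + G * a) - (A * Real.sin (s * a) + B * Real.cos (s * a)) * (F + H * a)))) *
          Real.sin_sq_add_cos_sq (t * b))
  have hwm2 : pd2 (fun a b =>
        -(c21 * u2 a b) * pd2 u1 a b + (c21 * u1 a b + c20) * pd2 u2 a b) = fun a b =>
      -(t * (c20 * (t * (E + G * a)))) * Real.sin (t * b) +
      (t * (c20 * (-(t * (F + H * a))))) * Real.cos (t * b) :=
    pd2_canon _
      (fun a => c20 * (-(t * (F + H * a))))
      (fun a => c20 * (t * (E + G * a)))
      (fun a => c21 * (t * ((C * Real.sin (s * a) + D * Real.cos (s * a)) * (E + G * a) -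
        (A * Real.sin (s * a) + B * Real.cos (s * a)) * (F + H * a)))) t
      (fun a b => by
        simp only [h2u1, h2u2, hu1 a b, hu2 a b]
        linear_combination (c21 * (t * ((C * Real.sin (s * a) + D * Real.cos (s * a)) *
          (E + G * a) - (A * Real.sin (s * a) + B * Real.cos (s * a)) * (F + H * a)))) *
          Real.sin_sq_add_cos_sq (t * b))
  refine ⟨?_, ?_, ?_, ?_, ?_⟩
  · intro c x1 x2
    have hbr : pd2 (fun a b => c * (u1 a b * pd2 u2 a b - u2 a b * pd2 u1 a b)) = fun a b =>
        -(t * (0 : ℝ)) * Real.sin (t * b) + (t * (0 : ℝ)) * Real.cos (t * b) :=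
      pd2_canon _ (fun _ => 0) (fun _ => 0)
        (fun a => c * (t * ((C * Real.sin (s * a) + D * Real.cos (s * a)) * (E + G * a) -
          (A * Real.sin (s * a) + B * Real.cos (s * a)) * (F + H * a)))) t
        (fun a b => by
          simp only [h2u1, h2u2, hu1 a b, hu2 a b]
          linear_combination (c * (t * ((C * Real.sin (s * a) + D * Real.cos (s * a)) *
            (E + G * a) - (A * Real.sin (s * a) + B * Real.cos (s * a)) * (F + H * a)))) *
            Real.sin_sq_add_cos_sq (t * b))
    rw [hbr]
    ring
  · intro x1 x2
    simp only [Mop1]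
    simp only [hwm1, h22u1]
    ring
  · rw [hV1]
    apply mem_span4_s17
      (-(k10 * (s * s) + p10 * (t * t)) * A - e10 * s * B - d10 * t * C)
      (-(k10 * (s * s) + p10 * (t * t)) * B + e10 * s * A - d10 * t * D)
      (-(k10 * (s * s) + p10 * (t * t)) * C - e10 * s * D + d10 * t * A)
      (-(k10 * (s * s) + p10 * (t * t)) * D + e10 * s * C + d10 * t * B)
    funext x1 x2
    simp only [Mop1]
    simp only [hwm1, h11u1]
    simp only [h1u1, h2u1, Pi.add_apply, Pi.smul_apply, smul_eq_mul]
    ring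
  · intro x1 x2
    simp only [Mop2]
    simp only [hwm2, h22u2]
    ring
  · rw [hV2]
    apply mem_span4_s17
      (-(c20 * (t * t)) * E + g20 * G - h20 * t * F)
      (-(c20 * (t * t)) * F + g20 * H + h20 * t * E)
      (-(c20 * (t * t)) * G - h20 * t * H)
      (-(c20 * (t * t)) * H + h20 * t * G)
    funext x1 x2
    simp only [Mop2]
    simp only [hwm2, h11u2]
    simp only [h1u2, h2u2, Pi.add_apply, Pi.smul_apply, smul_eq_mul]
    ring
end
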